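/- arXiv:2503.06657 — 6 statements merged into one kernel-verified Lean document; each statement's English description precedes it below -/
import Mathlib

section
/- Let n ≥ 3 be odd and m ≥ 2. The nested sum S_n[S_m] of the finite Sugihara chains S_n and S_m (viewed as quasi relation algebras, with the carriers made disjoint) is isomorphic to the finite Sugihara chain S_{n+m−1}, via the map sending a_j^K ↦ a_{j−ℓ} for −k ≤ j ≤ −1, a_j^K ↦ a_{j+ℓ} for 1 ≤ j ≤ k, and a_i^L ↦ a_i, where n = 2k+1 and m = 2ℓ or m = 2ℓ+1. -/
/-- The index set of the finite Sugihara chain `Sₙ` (as a subset of `ℤ`):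
for `n = 2k` the indices `-k,…,-1,1,…,k`, and for `n = 2k+1` the indices
`-k,…,-1,0,1,…,k`. -/
def sugSet (n : ℕ) : Set ℤ := {i : ℤ | 2 * |i| ≤ (n : ℤ) ∧ (Even n → i ≠ 0)}

/-- The index of the monoid identity of `Sₙ`: `a₁` if `n` is even, `a₀` if odd. -/
def sugOneIdx (n : ℕ) : ℤ := if Even n then 1 else 0

/-- Multiplication of the Sugihara chain on indices:
`aᵢ · aⱼ = aᵢ` if `|j| < |i|`, `aⱼ` if `|i| < |j|`, and `a_{min(i,j)}` if `|i| = |j|`. -/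
def sugMulIdx (i j : ℤ) : ℤ := if |j| < |i| then i else if |i| < |j| then j else min i j

/-- The carrier of the nested sum `Sₙ[Sₘ]` inside `ℤ ⊕ ℤ`: the left summand
encodes `Sₙ ∖ {a₀}` (for odd `n`, whose identity is `a₀`), the right summand
encodes `Sₘ`.  (Disjointness of the carriers is built into the sum type.) -/
def snsCar (n m : ℕ) : Set (ℤ ⊕ ℤ) :=
  {x | match x with
       | Sum.inl j => j ∈ sugSet n ∧ j ≠ 0
       | Sum.inr i => i ∈ sugSet m}

/-- Multiplication of the nested sum `Sₙ[Sₘ]` (an `L`-argument is replaced by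
the identity `a₀` of `K = Sₙ` when the other argument lies in `K ∖ {a₀}`). -/
def snsMul : ℤ ⊕ ℤ → ℤ ⊕ ℤ → ℤ ⊕ ℤ
  | Sum.inl j, Sum.inl j' => Sum.inl (sugMulIdx j j')
  | Sum.inl j, Sum.inr _ => Sum.inl (sugMulIdx j 0)
  | Sum.inr _, Sum.inl j' => Sum.inl (sugMulIdx 0 j')
  | Sum.inr i, Sum.inr i' => Sum.inr (sugMulIdx i i')

/-- Meet of the nested sum `Sₙ[Sₘ]`. -/
def snsInf : ℤ ⊕ ℤ → ℤ ⊕ ℤ → ℤ ⊕ ℤ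
  | Sum.inl j, Sum.inl j' => Sum.inl (min j j')
  | Sum.inl j, Sum.inr i => if 0 ≤ j then Sum.inr i else Sum.inl (min j 0)
  | Sum.inr i, Sum.inl j => if 0 ≤ j then Sum.inr i else Sum.inl (min j 0)
  | Sum.inr i, Sum.inr i' => Sum.inr (min i i')

/-- Join of the nested sum `Sₙ[Sₘ]`. -/
def snsSup : ℤ ⊕ ℤ → ℤ ⊕ ℤ → ℤ ⊕ ℤ
  | Sum.inl j, Sum.inl j' => Sum.inl (max j j')
  | Sum.inl j, Sum.inr i => if j ≤ 0 then Sum.inr i else Sum.inl (max j 0)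
  | Sum.inr i, Sum.inl j => if j ≤ 0 then Sum.inr i else Sum.inl (max j 0)
  | Sum.inr i, Sum.inr i' => Sum.inr (max i i')

/-- The componentwise negation `∼ = − = ¬` of the nested sum `Sₙ[Sₘ]`
(`∼aⱼ = a₋ⱼ` in a Sugihara chain). -/
def snsNeg : ℤ ⊕ ℤ → ℤ ⊕ ℤ
  | Sum.inl j => Sum.inl (-j)
  | Sum.inr i => Sum.inr (-i)

/-- The identity of the nested sum `Sₙ[Sₘ]`: `1_{K[L]} = 1_L`. -/
def snsOne (m : ℕ) : ℤ ⊕ ℤ := Sum.inr (sugOneIdx m)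

/-- The negation constant of the nested sum `Sₙ[Sₘ]`: `0_{K[L]} = 0_L = ∼1_L`. -/
def snsZero (m : ℕ) : ℤ ⊕ ℤ := Sum.inr (-sugOneIdx m)

/-- The map `Sₙ[Sₘ] → S_{n+m-1}` sending `aⱼᴷ ↦ a_{j-ℓ}` for `j < 0`,
`aⱼᴷ ↦ a_{j+ℓ}` for `j > 0`, and `aᵢᴸ ↦ aᵢ`, where `ℓ = ⌊m/2⌋`. -/
def sugIso (m : ℕ) : ℤ ⊕ ℤ → ℤ
  | Sum.inl j => if j < 0 then j - ((m / 2 : ℕ) : ℤ) else j + ((m / 2 : ℕ) : ℤ)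
  | Sum.inr i => i

/-!
On indices the map fixes `Sₘ` and pushes `a_j ∈ Sₙ ∖ {a₀}` away from `0` by `ℓ = ⌊m/2⌋`. Extended
by `0 ↦ ℓ`, this shift is strictly monotone and adds `ℓ` to every absolute value, so it commutes
with `min`, `max`, negation (away from `0`) and the Sugihara product, which only compares absolute
values and breaks ties by `min`. The elements of `Sₘ` have absolute value at most `ℓ`, the shifted
ones more than `ℓ`: in a mixed product the element of `Sₙ` wins on both sides, and in a mixed meet
or join the element of `Sₘ` sits between the negative and the positive part of `Sₙ`, exactly where
`a₀` sits in `Sₙ`. Counting absolute values, the two images tile `S_{n+m-1}` when `n` is odd.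
-/

theorem sugMulIdx_of_abs_lt {i j : ℤ} (h : |j| < |i|) : sugMulIdx i j = i := if_pos h

theorem sugMulIdx_comm (i j : ℤ) : sugMulIdx i j = sugMulIdx j i := by
  unfold sugMulIdx
  split_ifs <;> first | rfl | exact min_comm i j | (exfalso; linarith)

theorem sugMulIdx_zero_right (i : ℤ) : sugMulIdx i 0 = i := by
  unfold sugMulIdx
  split_ifs <;> simp_all [abs_pos]

theorem StrictMono.map_sugMulIdx {f : ℤ → ℤ} (hf : StrictMono f)
    (habs : ∀ a b, |f a| < |f b| ↔ |a| < |b|) (i j : ℤ) :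
    f (sugMulIdx i j) = sugMulIdx (f i) (f j) := by
  simp only [sugMulIdx, habs]
  split_ifs <;> simp only [hf.monotone.map_min]

theorem abs_le_of_mem_sugSet {m : ℕ} {i : ℤ} (hi : i ∈ sugSet m) : |i| ≤ ((m / 2 : ℕ) : ℤ) := by
  have := hi.1
  omega

theorem even_add_sub_one_iff {n : ℕ} (hn : Odd n) (m : ℕ) : Even (n + m - 1) ↔ Even m := by
  obtain ⟨k, rfl⟩ := hn
  rw [show 2 * k + 1 + m - 1 = 2 * k + m by omega, Nat.even_add, iff_true_left (even_two_mul k)]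

theorem sugOneIdx_add_sub_one {n : ℕ} (hn : Odd n) (m : ℕ) :
    sugOneIdx (n + m - 1) = sugOneIdx m := by
  simp only [sugOneIdx, even_add_sub_one_iff hn]

def shiftOut (L j : ℤ) : ℤ := if j < 0 then j - L else j + L

theorem abs_shiftOut {L : ℤ} (hL : 0 ≤ L) (j : ℤ) : |shiftOut L j| = |j| + L := by
  unfold shiftOut
  split_ifs with h
  · rw [abs_of_neg h, abs_of_neg (by omega)]; ring
  · rw [abs_of_nonneg (not_lt.mp h), abs_of_nonneg (by omega)]

theorem shiftOut_strictMono {L : ℤ} (hL : 0 ≤ L) : StrictMono (shiftOut L) := by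
  intro a b hab
  unfold shiftOut
  split_ifs <;> omega

theorem shiftOut_sugMulIdx {L : ℤ} (hL : 0 ≤ L) (i j : ℤ) :
    shiftOut L (sugMulIdx i j) = sugMulIdx (shiftOut L i) (shiftOut L j) :=
  (shiftOut_strictMono hL).map_sugMulIdx
    (fun a b => by rw [abs_shiftOut hL, abs_shiftOut hL, add_lt_add_iff_right]) i j

theorem shiftOut_neg (L : ℤ) {j : ℤ} (hj : j ≠ 0) : shiftOut L (-j) = -shiftOut L j := by
  unfold shiftOut
  split_ifs <;> omega

theorem abs_lt_abs_shiftOut {L i j : ℤ} (hL : 0 ≤ L) (hi : |i| ≤ L) (hj : j ≠ 0) :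
    |i| < |shiftOut L j| := by
  rw [abs_shiftOut hL]
  have := abs_pos.mpr hj
  omega

theorem exists_shiftOut_eq {L y : ℤ} (hy : L < |y|) :
    ∃ j ≠ 0, |j| + L = |y| ∧ shiftOut L j = y := by
  rcases lt_or_ge y 0 with h | h
  · rw [abs_of_neg h] at hy ⊢
    refine ⟨y + L, by omega, by rw [abs_of_neg (by omega)]; ring, ?_⟩
    unfold shiftOut; split_ifs <;> omega
  · rw [abs_of_nonneg h] at hy ⊢
    refine ⟨y - L, by omega, by rw [abs_of_pos (by omega)]; ring, ?_⟩
    unfold shiftOut; split_ifs <;> omega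

section nestedSum

variable {n m : ℕ}

theorem sugIso_snsMul {x y : ℤ ⊕ ℤ} (hx : x ∈ snsCar n m) (hy : y ∈ snsCar n m) :
    sugIso m (snsMul x y) = sugMulIdx (sugIso m x) (sugIso m y) := by
  have hL : (0 : ℤ) ≤ (m / 2 : ℕ) := Int.natCast_nonneg _
  rcases x with j | i <;> rcases y with j' | i'
  · exact shiftOut_sugMulIdx hL j j'
  · change shiftOut _ (sugMulIdx j 0) = sugMulIdx (shiftOut _ j) i'
    rw [sugMulIdx_zero_right,
      sugMulIdx_of_abs_lt (abs_lt_abs_shiftOut hL (abs_le_of_mem_sugSet hy) hx.2)]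
  · change shiftOut _ (sugMulIdx 0 j') = sugMulIdx i (shiftOut _ j')
    rw [sugMulIdx_comm 0, sugMulIdx_zero_right, sugMulIdx_comm,
      sugMulIdx_of_abs_lt (abs_lt_abs_shiftOut hL (abs_le_of_mem_sugSet hx) hy.2)]
  · rfl

theorem snsInf_comm (x y : ℤ ⊕ ℤ) : snsInf x y = snsInf y x := by
  rcases x with j | i <;> rcases y with j' | i' <;> simp only [snsInf, min_comm]

theorem snsSup_comm (x y : ℤ ⊕ ℤ) : snsSup x y = snsSup y x := by
  rcases x with j | i <;> rcases y with j' | i' <;> simp only [snsSup, max_comm]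

theorem sugIso_snsInf_inl_inr {j i : ℤ} (hj : j ≠ 0) (hi : |i| ≤ (m / 2 : ℕ)) :
    sugIso m (snsInf (Sum.inl j) (Sum.inr i)) = min (sugIso m (Sum.inl j)) i := by
  have := abs_le.mp hi
  rcases hj.lt_or_gt with h | h
  · simp only [snsInf, if_neg h.not_ge, min_eq_left h.le, sugIso, if_pos h]
    omega
  · simp only [snsInf, if_pos h.le, sugIso, if_neg h.not_gt]
    omega

theorem sugIso_snsSup_inl_inr {j i : ℤ} (hj : j ≠ 0) (hi : |i| ≤ (m / 2 : ℕ)) :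
    sugIso m (snsSup (Sum.inl j) (Sum.inr i)) = max (sugIso m (Sum.inl j)) i := by
  have := abs_le.mp hi
  rcases hj.lt_or_gt with h | h
  · simp only [snsSup, if_pos h.le, sugIso, if_pos h]
    omega
  · simp only [snsSup, if_neg h.not_ge, max_eq_left h.le, sugIso, if_neg h.not_gt]
    omega

theorem sugIso_snsInf {x y : ℤ ⊕ ℤ} (hx : x ∈ snsCar n m) (hy : y ∈ snsCar n m) :
    sugIso m (snsInf x y) = min (sugIso m x) (sugIso m y) := by
  rcases x with j | i <;> rcases y with j' | i'
  · exact (shiftOut_strictMono (Int.natCast_nonneg _)).monotone.map_min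
  · exact sugIso_snsInf_inl_inr hx.2 (abs_le_of_mem_sugSet hy)
  · rw [snsInf_comm, min_comm]
    exact sugIso_snsInf_inl_inr hy.2 (abs_le_of_mem_sugSet hx)
  · rfl

theorem sugIso_snsSup {x y : ℤ ⊕ ℤ} (hx : x ∈ snsCar n m) (hy : y ∈ snsCar n m) :
    sugIso m (snsSup x y) = max (sugIso m x) (sugIso m y) := by
  rcases x with j | i <;> rcases y with j' | i'
  · exact (shiftOut_strictMono (Int.natCast_nonneg _)).monotone.map_max
  · exact sugIso_snsSup_inl_inr hx.2 (abs_le_of_mem_sugSet hy)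
  · rw [snsSup_comm, max_comm]
    exact sugIso_snsSup_inl_inr hy.2 (abs_le_of_mem_sugSet hx)
  · rfl

theorem sugIso_snsNeg {x : ℤ ⊕ ℤ} (hx : x ∈ snsCar n m) :
    sugIso m (snsNeg x) = -sugIso m x := by
  rcases x with j | i
  · exact shiftOut_neg _ hx.2
  · rfl

theorem mapsTo_sugIso (hn : Odd n) : Set.MapsTo (sugIso m) (snsCar n m) (sugSet (n + m - 1)) := by
  have hpar := even_add_sub_one_iff hn m
  obtain ⟨k, rfl⟩ := hn
  rintro (j | i) hx
  · have := abs_pos.mpr hx.2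
    have := hx.1.1
    have habs : |sugIso m (Sum.inl j)| = |j| + (m / 2 : ℕ) := abs_shiftOut (Int.natCast_nonneg _) j
    refine ⟨by omega, fun _ h => ?_⟩
    rw [h, abs_zero] at habs
    omega
  · have := hx.1
    exact ⟨by change 2 * |i| ≤ _; omega, fun he => hx.2 (hpar.mp he)⟩

theorem injOn_sugIso : Set.InjOn (sugIso m) (snsCar n m) := by
  have hL : (0 : ℤ) ≤ (m / 2 : ℕ) := Int.natCast_nonneg _
  have sugIso_inl_ne : ∀ {j i}, Sum.inl j ∈ snsCar n m → Sum.inr i ∈ snsCar n m →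
      sugIso m (Sum.inl j) ≠ sugIso m (Sum.inr i) := fun hx hy h =>
    (abs_lt_abs_shiftOut hL (abs_le_of_mem_sugSet hy) hx.2).ne (congrArg abs h).symm
  rintro (j | i) hx (j' | i') hy h
  · exact congrArg Sum.inl ((shiftOut_strictMono hL).injective h)
  · exact (sugIso_inl_ne hx hy h).elim
  · exact (sugIso_inl_ne hy hx h.symm).elim
  · exact congrArg Sum.inr h

theorem surjOn_sugIso (hn : Odd n) : Set.SurjOn (sugIso m) (snsCar n m) (sugSet (n + m - 1)) := by
  have hpar := even_add_sub_one_iff hn m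
  obtain ⟨k, rfl⟩ := hn
  intro y hy
  have := hy.1
  by_cases hyL : |y| ≤ (m / 2 : ℕ)
  · exact ⟨Sum.inr y, ⟨by omega, fun he => hy.2 (hpar.mpr he)⟩, rfl⟩
  · obtain ⟨j, hj, habs, rfl⟩ := exists_shiftOut_eq (not_le.mp hyL)
    exact ⟨Sum.inl j, ⟨⟨by omega, fun _ => hj⟩, hj⟩, rfl⟩

end nestedSum

theorem sugihara_nestedSum_iso_general (n m : ℕ) (hodd : Odd n) :
    Set.BijOn (sugIso m) (snsCar n m) (sugSet (n + m - 1)) ∧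
    (∀ x ∈ snsCar n m, ∀ y ∈ snsCar n m,
      sugIso m (snsMul x y) = sugMulIdx (sugIso m x) (sugIso m y) ∧
      sugIso m (snsInf x y) = min (sugIso m x) (sugIso m y) ∧
      sugIso m (snsSup x y) = max (sugIso m x) (sugIso m y)) ∧
    (∀ x ∈ snsCar n m, sugIso m (snsNeg x) = -(sugIso m x)) ∧
    sugIso m (snsOne m) = sugOneIdx (n + m - 1) ∧
    sugIso m (snsZero m) = -(sugOneIdx (n + m - 1)) := by
  have hone := sugOneIdx_add_sub_one hodd m
  exact ⟨⟨mapsTo_sugIso hodd, injOn_sugIso, surjOn_sugIso hodd⟩,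
    fun x hx y hy => ⟨sugIso_snsMul hx hy, sugIso_snsInf hx hy, sugIso_snsSup hx hy⟩,
    fun x hx => sugIso_snsNeg hx, hone.symm, congrArg Neg.neg hone.symm⟩

/-- For odd `n ≥ 3` and `m ≥ 2`, the nested sum `Sₙ[Sₘ]` of
the Sugihara chains `Sₙ` and `Sₘ` (viewed as qRAs) is isomorphic to the
Sugihara chain `S_{n+m-1}` via the indicated map: the map is a bijection of
the carriers preserving `·`, `∧`, `∨`, the negation `∼ (= − = ¬)`, `1` and `0`. -/
theorem sugihara_nestedSum_iso (n m : ℕ) (hn : 3 ≤ n) (hodd : Odd n) (hm : 2 ≤ m) :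
    Set.BijOn (sugIso m) (snsCar n m) (sugSet (n + m - 1)) ∧
    (∀ x ∈ snsCar n m, ∀ y ∈ snsCar n m,
      sugIso m (snsMul x y) = sugMulIdx (sugIso m x) (sugIso m y) ∧
      sugIso m (snsInf x y) = min (sugIso m x) (sugIso m y) ∧
      sugIso m (snsSup x y) = max (sugIso m x) (sugIso m y)) ∧
    (∀ x ∈ snsCar n m, sugIso m (snsNeg x) = -(sugIso m x)) ∧
    sugIso m (snsOne m) = sugOneIdx (n + m - 1) ∧
    sugIso m (snsZero m) = -(sugOneIdx (n + m - 1)) :=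
  sugihara_nestedSum_iso_general n m hodd
end

section
/- Let L be a representable distributive quasi relation algebra. Then the nested sum S₃[L] of the three-element Sugihara chain S₃ and L is a representable distributive quasi relation algebra. Moreover, if L is finitely representable, then S₃[L] is finitely representable. -/
universe u v

/-- Composition of binary relations. -/
def rcomp {X : Type*} (R S : Set (X × X)) : Set (X × X) :=
  {p | ∃ z, (p.1, z) ∈ R ∧ (z, p.2) ∈ S}

/-- Converse of a binary relation. -/
def rconv {X : Type*} (R : Set (X × X)) : Set (X × X) := {p | (p.2, p.1) ∈ R}

/-- The graph of a function, as a binary relation. -/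
def graphRel {X : Type*} (f : X → X) : Set (X × X) := {p | p.2 = f p.1}

/-- The order relation `≤` as a set of pairs; this is the identity element `1`. -/
def oneRel {X : Type*} (le : X → X → Prop) : Set (X × X) := {p | le p.1 p.2}

/-- Up-sets of `(E, ≼)` where `(u,v) ≼ (x,y)` iff `x ≤ u` and `v ≤ y`. -/
def upSets {X : Type*} (le : X → X → Prop) (E : Set (X × X)) : Set (Set (X × X)) :=
  {R | R ⊆ E ∧ ∀ p ∈ R, ∀ q ∈ E, le q.1 p.1 → le p.2 q.2 → q ∈ R}

/-- `∼R = R^{c⌣} ; α`, complement taken within `E`. -/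
def snegRel {X : Type*} (E : Set (X × X)) (a : X → X) (R : Set (X × X)) : Set (X × X) :=
  rcomp (rconv (E \ R)) (graphRel a)

/-- `−R = α ; R^{c⌣}`, complement taken within `E`. -/
def rnegRel {X : Type*} (E : Set (X × X)) (a : X → X) (R : Set (X × X)) : Set (X × X) :=
  rcomp (graphRel a) (rconv (E \ R))

/-- `¬R = α ; β ; R^c ; β`, complement taken within `E`. -/
def qnegRel {X : Type*} (E : Set (X × X)) (a b : X → X) (R : Set (X × X)) : Set (X × X) :=
  rcomp (graphRel a) (rcomp (graphRel b) (rcomp (E \ R) (graphRel b)))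

/-- The constant `0 = α ; (≤^c)⌣`, complement taken within `E`. -/
def zeroRel {X : Type*} (le : X → X → Prop) (E : Set (X × X)) (a : X → X) : Set (X × X) :=
  rcomp (graphRel a) (rconv (E \ oneRel le))

/-- The data needed to build the algebra `Dq(E)`: a poset `(X, le)`, an
equivalence relation `E ⊇ le`, an order automorphism `a` and a self-inverse
dual order automorphism `b` of the poset whose graphs are contained in `E`
and which satisfy `β = α ; β ; α`. -/
structure RepBase {X : Type} (le : X → X → Prop) (E : Set (X × X)) (a b : X → X) : Prop where
  le_refl : ∀ u, le u u
  le_antisymm : ∀ u v, le u v → le v u → u = v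
  le_trans : ∀ u v w, le u v → le v w → le u w
  equiv : Equivalence fun u v => (u, v) ∈ E
  le_sub : ∀ u v, le u v → (u, v) ∈ E
  a_bij : Function.Bijective a
  a_ord : ∀ u v, le u v ↔ le (a u) (a v)
  b_invol : ∀ u, b (b u) = u
  b_dual : ∀ u v, le u v ↔ le (b v) (b u)
  a_sub : ∀ u, (u, a u) ∈ E
  b_sub : ∀ u, (u, b u) ∈ E
  aba : ∀ u, a (b (a u)) = b u

/-- The map `f` exhibits the subset `S` of `A` (closed under the given qRA
operations) as a subalgebra of the algebra `Dq(E)` of up-sets of `(E, ≼)`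
over the poset `(X, le)` with order automorphism `a` and self-inverse dual
order automorphism `b`; i.e. `f` is an injective qRA homomorphism into
`Dq(E)`. -/
structure IsQRAEmbedding (A : Type u) (S : Set A)
    (inf' sup' mul' : A → A → A) (sneg' rneg' qneg' : A → A) (one' zero' : A)
    {X : Type} (le : X → X → Prop) (E : Set (X × X)) (a b : X → X)
    (f : A → Set (X × X)) : Prop where
  base : RepBase le E a b
  closed_inf : ∀ m ∈ S, ∀ m' ∈ S, inf' m m' ∈ S
  closed_sup : ∀ m ∈ S, ∀ m' ∈ S, sup' m m' ∈ S
  closed_mul : ∀ m ∈ S, ∀ m' ∈ S, mul' m m' ∈ S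
  closed_sneg : ∀ m ∈ S, sneg' m ∈ S
  closed_rneg : ∀ m ∈ S, rneg' m ∈ S
  closed_qneg : ∀ m ∈ S, qneg' m ∈ S
  one_mem : one' ∈ S
  zero_mem : zero' ∈ S
  maps_up : ∀ m ∈ S, f m ∈ upSets le E
  inj : Set.InjOn f S
  map_inf : ∀ m ∈ S, ∀ m' ∈ S, f (inf' m m') = f m ∩ f m'
  map_sup : ∀ m ∈ S, ∀ m' ∈ S, f (sup' m m') = f m ∪ f m'
  map_mul : ∀ m ∈ S, ∀ m' ∈ S, f (mul' m m') = rcomp (f m) (f m')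
  map_sneg : ∀ m ∈ S, f (sneg' m) = snegRel E a (f m)
  map_rneg : ∀ m ∈ S, f (rneg' m) = rnegRel E a (f m)
  map_qneg : ∀ m ∈ S, f (qneg' m) = qnegRel E a b (f m)
  map_one : f one' = oneRel le
  map_zero : f zero' = zeroRel le E a

/-- The algebra carried by the subset `S` of `A` (with the given qRA
operations) is representable: it embeds as a qRA into some `Dq(E)`. -/
def RepresentableOn (A : Type u) (S : Set A)
    (inf' sup' mul' : A → A → A) (sneg' rneg' qneg' : A → A) (one' zero' : A) : Prop :=
  ∃ (X : Type) (le : X → X → Prop) (E : Set (X × X)) (a b : X → X) (f : A → Set (X × X)),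
    IsQRAEmbedding A S inf' sup' mul' sneg' rneg' qneg' one' zero' le E a b f

/-- Finitely representable: representable over a finite poset. -/
def FinRepresentableOn (A : Type u) (S : Set A)
    (inf' sup' mul' : A → A → A) (sneg' rneg' qneg' : A → A) (one' zero' : A) : Prop :=
  ∃ (X : Type) (le : X → X → Prop) (E : Set (X × X)) (a b : X → X) (f : A → Set (X × X)),
    Finite X ∧ IsQRAEmbedding A S inf' sup' mul' sneg' rneg' qneg' one' zero' le E a b f

/-- A quasi relation algebra `⟨A, ∧, ∨, ·, ∼, −, ¬, 1, 0⟩`: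
a lattice, a monoid with `a·b ≤ c ↔ a ≤ −(b·∼c) ↔ b ≤ ∼(−c·a)`,
`0 = ∼1 = −1`, (In): `∼(−a) = a = −(∼a)`, an involution `¬` satisfying
(Dm), (Di) and (Dp) (where `a + b := ∼(−a · −b)`). -/
class QRA (α : Type u) where
  le : α → α → Prop
  inf : α → α → α
  sup : α → α → α
  mul : α → α → α
  sneg : α → α
  rneg : α → α
  qneg : α → α
  one : α
  zero : α
  le_refl : ∀ x, le x x
  le_antisymm : ∀ x y, le x y → le y x → x = y
  le_trans : ∀ x y z, le x y → le y z → le x z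
  inf_le_left : ∀ x y, le (inf x y) x
  inf_le_right : ∀ x y, le (inf x y) y
  le_inf : ∀ x y z, le x y → le x z → le x (inf y z)
  le_sup_left : ∀ x y, le x (sup x y)
  le_sup_right : ∀ x y, le y (sup x y)
  sup_le : ∀ x y z, le x z → le y z → le (sup x y) z
  mul_assoc : ∀ x y z, mul (mul x y) z = mul x (mul y z)
  one_mul : ∀ x, mul one x = x
  mul_one : ∀ x, mul x one = x
  mul_le_left : ∀ x y z, le (mul x y) z ↔ le x (rneg (mul y (sneg z)))
  mul_le_right : ∀ x y z, le (mul x y) z ↔ le y (sneg (mul (rneg z) x))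
  zero_sneg_one : zero = sneg one
  zero_rneg_one : zero = rneg one
  sneg_rneg : ∀ x, sneg (rneg x) = x
  rneg_sneg : ∀ x, rneg (sneg x) = x
  qneg_qneg : ∀ x, qneg (qneg x) = x
  dm : ∀ x y, qneg (sup x y) = inf (qneg x) (qneg y)
  di : ∀ x, qneg (sneg x) = rneg (qneg x)
  dp : ∀ x y, qneg (mul x y) = sneg (mul (rneg (qneg x)) (rneg (qneg y)))

variable {L : Type u} [QRA L]

/-- Meet on the nested sum `Sₙ[L]` (ambient carrier `ℤ ⊕ L`; the `K = Sₙ` part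
is encoded by Sugihara indices, whose identity has index `0`). -/
def sklInf : ℤ ⊕ L → ℤ ⊕ L → ℤ ⊕ L
  | Sum.inl j, Sum.inl j' => Sum.inl (min j j')
  | Sum.inl j, Sum.inr l => if 0 ≤ j then Sum.inr l else Sum.inl (min j 0)
  | Sum.inr l, Sum.inl j => if 0 ≤ j then Sum.inr l else Sum.inl (min j 0)
  | Sum.inr l, Sum.inr l' => Sum.inr (QRA.inf l l')

/-- Join on the nested sum `Sₙ[L]`. -/
def sklSup : ℤ ⊕ L → ℤ ⊕ L → ℤ ⊕ L
  | Sum.inl j, Sum.inl j' => Sum.inl (max j j')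
  | Sum.inl j, Sum.inr l => if j ≤ 0 then Sum.inr l else Sum.inl (max j 0)
  | Sum.inr l, Sum.inl j => if j ≤ 0 then Sum.inr l else Sum.inl (max j 0)
  | Sum.inr l, Sum.inr l' => Sum.inr (QRA.sup l l')

/-- Multiplication on the nested sum `Sₙ[L]`: across parts the `L`-argument is
replaced by the identity `a₀` (index `0`) of `Sₙ`. -/
def sklMul : ℤ ⊕ L → ℤ ⊕ L → ℤ ⊕ L
  | Sum.inl j, Sum.inl j' => Sum.inl (sugMulIdx j j')
  | Sum.inl j, Sum.inr _ => Sum.inl (sugMulIdx j 0)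
  | Sum.inr _, Sum.inl j' => Sum.inl (sugMulIdx 0 j')
  | Sum.inr l, Sum.inr l' => Sum.inr (QRA.mul l l')

/-- `∼` on the nested sum `Sₙ[L]`, acting componentwise (`∼aⱼ = a₋ⱼ` on `Sₙ`). -/
def sklSneg : ℤ ⊕ L → ℤ ⊕ L
  | Sum.inl j => Sum.inl (-j)
  | Sum.inr l => Sum.inr (QRA.sneg l)

/-- `−` on the nested sum `Sₙ[L]`, acting componentwise. -/
def sklRneg : ℤ ⊕ L → ℤ ⊕ L
  | Sum.inl j => Sum.inl (-j)
  | Sum.inr l => Sum.inr (QRA.rneg l)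

/-- `¬` on the nested sum `Sₙ[L]`, acting componentwise. -/
def sklQneg : ℤ ⊕ L → ℤ ⊕ L
  | Sum.inl j => Sum.inl (-j)
  | Sum.inr l => Sum.inr (QRA.qneg l)

/-- The identity of the nested sum: `1_{Sₙ[L]} = 1_L`. -/
def sklOne : ℤ ⊕ L := Sum.inr QRA.one

/-- The negation constant of the nested sum: `0_{Sₙ[L]} = 0_L`. -/
def sklZero : ℤ ⊕ L := Sum.inr QRA.zero

/-- The carrier of the nested sum `Sₙ[L]` inside `ℤ ⊕ L`:
`(Sₙ ∖ {a₀}) ∪ L`. -/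
def sklCar (n : ℕ) : Set (ℤ ⊕ L) :=
  {x | match x with
       | Sum.inl j => j ∈ sugSet n ∧ j ≠ 0
       | Sum.inr _ => True}


namespace S3RepAux

section QRALat
variable {L : Type u} [QRA L]

lemma qra_absorb1 (l m : L) : QRA.sup (QRA.inf l m) l = l :=
  QRA.le_antisymm _ _ (QRA.sup_le _ _ _ (QRA.inf_le_left _ _) (QRA.le_refl _))
    (QRA.le_sup_right _ _)

lemma qra_absorb2 (l n : L) : QRA.sup l (QRA.inf l n) = l :=
  QRA.le_antisymm _ _ (QRA.sup_le _ _ _ (QRA.le_refl _) (QRA.inf_le_left _ _))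
    (QRA.le_sup_left _ _)

lemma qra_sup_idem (l : L) : QRA.sup l l = l :=
  QRA.le_antisymm _ _ (QRA.sup_le _ _ _ (QRA.le_refl _) (QRA.le_refl _)) (QRA.le_sup_left _ _)

set_option linter.unusedSectionVars false in
lemma carrier_inl {j : ℤ} (h : (Sum.inl j : ℤ ⊕ L) ∈ sklCar 3) : j = 1 ∨ j = -1 := by
  obtain ⟨⟨h1, -⟩, h2⟩ := h
  rcases abs_cases j with ⟨he, hs⟩ | ⟨he, hs⟩ <;> omega

lemma skl_distrib (hdistL : ∀ x y z : L, QRA.inf x (QRA.sup y z)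
      = QRA.sup (QRA.inf x y) (QRA.inf x z)) :
    ∀ x ∈ sklCar (L := L) 3, ∀ y ∈ sklCar (L := L) 3, ∀ z ∈ sklCar (L := L) 3,
      sklInf x (sklSup y z) = sklSup (sklInf x y) (sklInf x z) := by
  rintro (j | l) hx (j' | m) hy (j'' | n) hz
  · simp only [sklInf, sklSup]
    rw [min_max_distrib_left]
  · -- x = inl j, y = inl j', z = inr n
    rcases carrier_inl hx with rfl | rfl <;> rcases carrier_inl hy with rfl | rfl <;>
      simp [sklInf, sklSup]
  · rcases carrier_inl hx with rfl | rfl <;> rcases carrier_inl hz with rfl | rfl <;>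
      simp [sklInf, sklSup]
  · rcases carrier_inl hx with rfl | rfl <;> simp [sklInf, sklSup]
  · rcases carrier_inl hy with rfl | rfl <;> rcases carrier_inl hz with rfl | rfl <;>
      simp [sklInf, sklSup, qra_absorb1, qra_absorb2, qra_sup_idem]
  · rcases carrier_inl hy with rfl | rfl <;> simp [sklInf, sklSup, qra_absorb1, qra_absorb2, qra_sup_idem]
  · rcases carrier_inl hz with rfl | rfl <;> simp [sklInf, sklSup, qra_absorb1, qra_absorb2, qra_sup_idem]
  · simp [sklInf, sklSup, hdistL]

end QRALat


section Constr

variable {X K : Type}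

/-- Carrier of the extended poset: `X` together with four gadget points per
class (indexed by `Option K`; `none` is a standalone pure-gadget class). -/
abbrev XP (X K : Type) : Type := X ⊕ (Option K × Fin 4)

/-- Class of a point. -/
def clsP (c : X → K) : XP X K → Option K
  | Sum.inl x => some (c x)
  | Sum.inr g => g.1

/-- The extended order: gadget indices `0,1` are incomparable bottoms of the
class, `2,3` incomparable tops, `X`-points in the middle. -/
def nleP (le : X → X → Prop) (c : X → K) : XP X K → XP X K → Prop
  | Sum.inl x, Sum.inl y => le x y
  | Sum.inl x, Sum.inr g => some (c x) = g.1 ∧ 2 ≤ (g.2 : ℕ)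
  | Sum.inr g, Sum.inl y => g.1 = some (c y) ∧ (g.2 : ℕ) < 2
  | Sum.inr g, Sum.inr g' => g.1 = g'.1 ∧ (g.2 = g'.2 ∨ ((g.2 : ℕ) < 2 ∧ 2 ≤ (g'.2 : ℕ)))

/-- The extended equivalence relation. -/
def EPr (c : X → K) : Set (XP X K × XP X K) := {p | clsP c p.1 = clsP c p.2}

def sigA : Fin 4 → Fin 4 := ![1, 0, 3, 2]
def sigB : Fin 4 → Fin 4 := ![2, 3, 0, 1]

/-- Extended order automorphism. -/
def aPf (a : X → X) : XP X K → XP X K := Sum.map a fun g => (g.1, sigA g.2)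

/-- Extended dual order automorphism. -/
def bPf (b : X → X) : XP X K → XP X K := Sum.map b fun g => (g.1, sigB g.2)

/-- The common gadget part of the image relations: all `≤`-pairs touching a
gadget point. -/
def MPr (le : X → X → Prop) (c : X → K) : Set (XP X K × XP X K) :=
  {p | nleP le c p.1 p.2 ∧ (p.1.isRight = true ∨ p.2.isRight = true)}

/-- Inclusion of a relation on `X` into the extended carrier. -/
def injP : Set (X × X) → Set (XP X K × XP X K) := fun R =>
  {p | ∃ x y, p.1 = Sum.inl x ∧ p.2 = Sum.inl y ∧ (x, y) ∈ R}

/-- The embedding of the nested sum. -/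
def fPf {L : Type u} (le : X → X → Prop) (c : X → K) (f : L → Set (X × X)) :
    ℤ ⊕ L → Set (XP X K × XP X K)
  | Sum.inl j => if 0 < j then EPr c else if j < 0 then ∅ else oneRel (nleP le c)
  | Sum.inr l => injP (f l) ∪ MPr le c

/-- All the facts about the base representation that the construction uses. -/
structure CtxP (le : X → X → Prop) (c : X → K) (E : Set (X × X)) (a b : X → X) : Prop where
  hE : ∀ x y, ((x, y) ∈ E ↔ c x = c y)
  lrefl : ∀ x, le x x
  lantisymm : ∀ x y, le x y → le y x → x = y
  ltrans : ∀ x y z, le x y → le y z → le x z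
  hle : ∀ x y, le x y → c x = c y
  hac : ∀ x, c (a x) = c x
  hai : Function.Injective a
  has : Function.Surjective a
  haord : ∀ u v, le u v ↔ le (a u) (a v)
  hbc : ∀ x, c (b x) = c x
  hbi : ∀ x, b (b x) = x
  hbd : ∀ u v, le u v ↔ le (b v) (b u)
  haba : ∀ u, a (b (a u)) = b u

section Lemmas

variable {le : X → X → Prop} {c : X → K} {E : Set (X × X)} {a b : X → X}

lemma sigA_invol : ∀ i, sigA (sigA i) = i := by decide
lemma sigB_invol : ∀ i, sigB (sigB i) = i := by decide
lemma sigA_hi : ∀ i : Fin 4, 2 ≤ (sigA i : ℕ) ↔ 2 ≤ (i : ℕ) := by decide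
lemma sigA_lo : ∀ i : Fin 4, (sigA i : ℕ) < 2 ↔ (i : ℕ) < 2 := by decide
lemma sigB_hi : ∀ i : Fin 4, 2 ≤ (sigB i : ℕ) ↔ (i : ℕ) < 2 := by decide
lemma sigB_lo : ∀ i : Fin 4, (sigB i : ℕ) < 2 ↔ 2 ≤ (i : ℕ) := by decide

lemma nleP_refl (u : XP X K) (h : ∀ x, le x x) : nleP le c u u := by
  rcases u with x | g
  · exact h x
  · exact ⟨rfl, Or.inl rfl⟩

lemma nleP_trans (h : CtxP le c E a b) {u v w : XP X K}
    (h1 : nleP le c u v) (h2 : nleP le c v w) : nleP le c u w := by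
  rcases u with x | g <;> rcases v with y | g' <;> rcases w with z | g'' <;>
    simp only [nleP, ← Fin.val_inj] at *
  · exact h.ltrans _ _ _ h1 h2
  · refine ⟨?_, h2.2⟩; rw [h.hle _ _ h1]; exact h2.1
  · obtain ⟨-, hh1⟩ := h1; obtain ⟨-, hh2⟩ := h2; omega
  · obtain ⟨e1, c1⟩ := h1; obtain ⟨e2, c2⟩ := h2
    refine ⟨e1.trans e2, ?_⟩
    rcases c2 with c2 | c2 <;> omega
  · obtain ⟨e1, c1⟩ := h1
    refine ⟨?_, c1⟩; rw [e1, h.hle _ _ h2]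
  · obtain ⟨e1, c1⟩ := h1
    exact ⟨e1.trans h2.1, Or.inr ⟨c1, h2.2⟩⟩
  · obtain ⟨e1, c1⟩ := h1
    refine ⟨e1.trans h2.1, ?_⟩
    rcases c1 with c1 | c1 <;> omega
  · obtain ⟨e1, c1⟩ := h1; obtain ⟨e2, c2⟩ := h2
    refine ⟨e1.trans e2, ?_⟩
    rcases c1 with c1 | c1 <;> rcases c2 with c2 | c2 <;> omega

lemma nleP_antisymm (h : CtxP le c E a b) {u v : XP X K}
    (h1 : nleP le c u v) (h2 : nleP le c v u) : u = v := by
  rcases u with x | g <;> rcases v with y | g' <;>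
    simp only [nleP, ← Fin.val_inj] at *
  · exact congrArg Sum.inl (h.lantisymm _ _ h1 h2)
  · obtain ⟨-, hh1⟩ := h1; obtain ⟨-, hh2⟩ := h2; omega
  · obtain ⟨-, hh1⟩ := h1; obtain ⟨-, hh2⟩ := h2; omega
  · obtain ⟨e1, c1⟩ := h1; obtain ⟨e2, c2⟩ := h2
    refine congrArg Sum.inr (Prod.ext e1 (Fin.val_injective ?_))
    rcases c1 with c1 | c1 <;> rcases c2 with c2 | c2 <;> omega

lemma nleP_cls (h : CtxP le c E a b) {u v : XP X K} (huv : nleP le c u v) :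
    clsP c u = clsP c v := by
  rcases u with x | g <;> rcases v with y | g' <;> simp only [nleP, clsP] at *
  · exact congrArg some (h.hle _ _ huv)
  · exact huv.1
  · exact huv.1
  · exact huv.1

lemma oneP_eq : oneRel (nleP le c) = injP (oneRel le) ∪ MPr le c := by
  ext ⟨u, v⟩
  rcases u with x | g <;> rcases v with y | g' <;>
    simp [oneRel, injP, MPr, nleP, Sum.isRight]

lemma injP_sub_EPr (h : CtxP le c E a b) {R : Set (X × X)} (hR : R ⊆ E) :
    injP R ⊆ EPr (K := K) c := by
  rintro ⟨u, v⟩ ⟨x, y, hu, hv, hxy⟩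
  subst hu; subst hv
  exact congrArg some ((h.hE x y).1 (hR hxy))

lemma MPr_sub_EPr (h : CtxP le c E a b) : MPr le c ⊆ EPr (K := K) c :=
  fun _ hp => nleP_cls h hp.1

lemma injP_inter (R S : Set (X × X)) :
    injP (K := K) (R ∩ S) = injP R ∩ injP S := by
  ext ⟨u, v⟩
  constructor
  · rintro ⟨x, y, rfl, rfl, hR, hS⟩
    exact ⟨⟨x, y, rfl, rfl, hR⟩, ⟨x, y, rfl, rfl, hS⟩⟩
  · rintro ⟨⟨x, y, rfl, rfl, hR⟩, ⟨x', y', hx, hy, hS⟩⟩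
    cases Sum.inl_injective hx; cases Sum.inl_injective hy
    exact ⟨x, y, rfl, rfl, hR, hS⟩

lemma injP_union (R S : Set (X × X)) :
    injP (K := K) (R ∪ S) = injP R ∪ injP S := by
  ext ⟨u, v⟩
  constructor
  · rintro ⟨x, y, rfl, rfl, hR | hS⟩
    · exact Or.inl ⟨x, y, rfl, rfl, hR⟩
    · exact Or.inr ⟨x, y, rfl, rfl, hS⟩
  · rintro (⟨x, y, rfl, rfl, hR⟩ | ⟨x, y, rfl, rfl, hS⟩)
    · exact ⟨x, y, rfl, rfl, Or.inl hR⟩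
    · exact ⟨x, y, rfl, rfl, Or.inr hS⟩


lemma mem_snegRel {Y : Type} {E : Set (Y × Y)} {a : Y → Y} {T : Set (Y × Y)} {v w : Y} :
    (v, w) ∈ snegRel E a T ↔ ∃ z, (z, v) ∈ E \ T ∧ w = a z := by
  simp [snegRel, rcomp, rconv, graphRel, and_comm]

lemma mem_rnegRel {Y : Type} {E : Set (Y × Y)} {a : Y → Y} {T : Set (Y × Y)} {u w : Y} :
    (u, w) ∈ rnegRel E a T ↔ (w, a u) ∈ E \ T := by
  simp [rnegRel, rcomp, rconv, graphRel]

lemma mem_qnegRel {Y : Type} {E : Set (Y × Y)} {a b : Y → Y} (hb : ∀ u, b (b u) = u)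
    {T : Set (Y × Y)} {u w : Y} :
    (u, w) ∈ qnegRel E a b T ↔ (b (a u), b w) ∈ E \ T := by
  simp only [qnegRel, rcomp, graphRel, Set.mem_setOf_eq]
  constructor
  · rintro ⟨z1, rfl, z2, rfl, z3, hz3, rfl⟩
    rwa [hb]
  · intro hm
    exact ⟨a u, rfl, b (a u), rfl, b w, hm, (hb w).symm⟩

lemma rcomp_empty_left {Y : Type} (T : Set (Y × Y)) : rcomp ∅ T = ∅ := by
  ext ⟨u, v⟩; simp [rcomp]

lemma rcomp_empty_right {Y : Type} (T : Set (Y × Y)) : rcomp T ∅ = ∅ := by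
  ext ⟨u, v⟩; simp [rcomp]

lemma isRight_cases (u : XP X K) : (∃ x, u = Sum.inl x) ∨ u.isRight = true := by
  rcases u with x | g
  · exact Or.inl ⟨x, rfl⟩
  · exact Or.inr rfl

/-- Composition of extended relations. -/
lemma compP (h : CtxP le c E a b) {R S : Set (X × X)} (hR : R ⊆ E) (hS : S ⊆ E) :
    rcomp (injP R ∪ MPr le c) (injP S ∪ MPr le c) = injP (K := K) (rcomp R S) ∪ MPr le c := by
  ext ⟨u, w⟩
  constructor
  · rintro ⟨z, h1 | h1, h2 | h2⟩
    · -- injP ; injP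
      obtain ⟨x, y, rfl, rfl, hxy⟩ := h1
      obtain ⟨y', w', hz, rfl, hyw⟩ := h2
      cases Sum.inl_injective hz
      exact Or.inl ⟨x, w', rfl, rfl, y, hxy, hyw⟩
    · -- injP ; MPr
      obtain ⟨x, y, rfl, rfl, hxy⟩ := h1
      obtain ⟨hnle, hr⟩ := h2
      rcases w with w' | g
      · simp [Sum.isRight] at hr
      · refine Or.inr ⟨?_, Or.inr rfl⟩
        obtain ⟨hcl, hhi⟩ := hnle
        exact ⟨by rw [congrArg some ((h.hE x y).1 (hR hxy))]; exact hcl, hhi⟩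
    · -- MPr ; injP
      obtain ⟨y, w', rfl, rfl, hyw⟩ := h2
      obtain ⟨hnle, hr⟩ := h1
      rcases u with u' | g
      · simp [Sum.isRight] at hr
      · refine Or.inr ⟨?_, Or.inl rfl⟩
        obtain ⟨hcl, hlo⟩ := hnle
        exact ⟨by rw [hcl, congrArg some ((h.hE y w').1 (hS hyw))], hlo⟩
    · -- MPr ; MPr
      refine Or.inr ⟨nleP_trans h h1.1 h2.1, ?_⟩
      rcases isRight_cases u with ⟨x, rfl⟩ | hr
      · rcases isRight_cases w with ⟨y, rfl⟩ | hw
        · exfalso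
          rcases h1.2 with hz | hz
          · simp [Sum.isRight] at hz
          · rcases z with z' | g
            · simp [Sum.isRight] at hz
            · obtain ⟨-, hhi⟩ := h1.1
              obtain ⟨-, hlo⟩ := h2.1
              omega
        · exact Or.inr hw
      · exact Or.inl hr
  · rintro (⟨x, y, rfl, rfl, t, ht1, ht2⟩ | hM)
    · exact ⟨Sum.inl t, Or.inl ⟨x, t, rfl, rfl, ht1⟩, Or.inl ⟨t, y, rfl, rfl, ht2⟩⟩
    · rcases isRight_cases w with ⟨y, rfl⟩ | hw
      · -- then u is a gadget point; use the loop at u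
        rcases isRight_cases u with ⟨x, rfl⟩ | hu
        · exfalso; rcases hM.2 with hz | hz <;> simp [Sum.isRight] at hz
        · exact ⟨u, Or.inr ⟨nleP_refl u h.lrefl, Or.inl hu⟩, Or.inr hM⟩
      · exact ⟨w, Or.inr hM, Or.inr ⟨nleP_refl w h.lrefl, Or.inl hw⟩⟩

lemma compP_EP_left (h : CtxP le c E a b) {R : Set (X × X)} (hR : R ⊆ E) :
    rcomp (EPr c) (injP R ∪ MPr le c) = EPr (K := K) c := by
  ext ⟨u, w⟩
  constructor
  · rintro ⟨z, h1, h2 | h2⟩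
    · obtain ⟨x, y, rfl, rfl, hxy⟩ := h2
      exact h1.trans (congrArg some ((h.hE x y).1 (hR hxy)))
    · exact Set.mem_setOf_eq ▸ (h1.trans (nleP_cls h h2.1))
  · intro hm
    rcases w with y | g
    · refine ⟨Sum.inr (some (c y), (0 : Fin 4)), ?_, Or.inr ⟨⟨rfl, by norm_num⟩, Or.inl rfl⟩⟩
      exact hm
    · exact ⟨Sum.inr g, hm, Or.inr ⟨nleP_refl _ h.lrefl, Or.inl rfl⟩⟩

lemma compP_EP_right (h : CtxP le c E a b) {R : Set (X × X)} (hR : R ⊆ E) :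
    rcomp (injP R ∪ MPr le c) (EPr c) = EPr (K := K) c := by
  ext ⟨u, w⟩
  constructor
  · rintro ⟨z, h1 | h1, h2⟩
    · obtain ⟨x, y, rfl, rfl, hxy⟩ := h1
      exact (congrArg some ((h.hE x y).1 (hR hxy))).trans h2
    · exact Set.mem_setOf_eq ▸ ((nleP_cls h h1.1).trans h2)
  · intro hm
    rcases u with x | g
    · refine ⟨Sum.inr (some (c x), (2 : Fin 4)), Or.inr ⟨⟨rfl, by norm_num⟩, Or.inr rfl⟩, ?_⟩
      exact hm
    · exact ⟨Sum.inr g, Or.inr ⟨nleP_refl _ h.lrefl, Or.inl rfl⟩, hm⟩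

lemma compP_EP_EP : rcomp (EPr c) (EPr c) = EPr (K := K) c := by
  ext ⟨u, w⟩
  constructor
  · rintro ⟨z, h1, h2⟩
    exact Set.mem_setOf_eq ▸ (h1.trans h2)
  · intro hm
    exact ⟨u, rfl, hm⟩

lemma upP_EP : EPr c ∈ upSets (nleP le c) (EPr (K := K) c) :=
  ⟨subset_rfl, fun _ _ q hq _ _ => hq⟩

lemma upP_empty : (∅ : Set (XP X K × XP X K)) ∈ upSets (nleP le c) (EPr c) :=
  ⟨Set.empty_subset _, fun p hp => absurd hp (Set.notMem_empty p)⟩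

lemma upP (h : CtxP le c E a b) {R : Set (X × X)} (hR : R ∈ upSets le E) :
    injP R ∪ MPr le c ∈ upSets (nleP le c) (EPr (K := K) c) := by
  refine ⟨Set.union_subset (injP_sub_EPr h hR.1) (MPr_sub_EPr h), ?_⟩
  rintro ⟨u, v⟩ (⟨x, y, rfl, rfl, hxy⟩ | hM) ⟨u', v'⟩ hq hq1 hq2
  · rcases u' with x' | g
    · rcases v' with y' | g'
      · refine Or.inl ⟨x', y', rfl, rfl, ?_⟩
        exact hR.2 (x, y) hxy (x', y') ((h.hE x' y').2 (Option.some.inj hq)) hq1 hq2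
      · exact Or.inr ⟨⟨hq, hq2.2⟩, Or.inr rfl⟩
    · rcases v' with y' | g'
      · exact Or.inr ⟨⟨hq, hq1.2⟩, Or.inl rfl⟩
      · exact Or.inr ⟨⟨hq, Or.inr ⟨hq1.2, hq2.2⟩⟩, Or.inl rfl⟩
  · refine Or.inr ⟨nleP_trans h (nleP_trans h hq1 hM.1) hq2, ?_⟩
    rcases isRight_cases u' with ⟨x', rfl⟩ | hu
    · rcases isRight_cases v' with ⟨y', rfl⟩ | hv
      · exfalso
        have hnle := hM.1
        rcases hM.2 with hz | hz
        · rcases u with u0 | g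
          · simp [Sum.isRight] at hz
          · -- u gadget : from hq1, 2 ≤ g.2
            have h2g : 2 ≤ (g.2 : ℕ) := hq1.2
            rcases v with v0 | g'
            · have : (g.2 : ℕ) < 2 := hnle.2
              omega
            · have hlt : (g'.2 : ℕ) < 2 := hq2.2
              rcases hnle.2 with he | he
              · rw [he] at h2g; omega
              · omega
        · rcases v with v0 | g'
          · simp [Sum.isRight] at hz
          · have hlt : (g'.2 : ℕ) < 2 := hq2.2
            rcases u with u0 | g
            · have : 2 ≤ (g'.2 : ℕ) := hnle.2
              omega
            · have h2g : 2 ≤ (g.2 : ℕ) := hq1.2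
              rcases hnle.2 with he | he
              · rw [he] at h2g; omega
              · omega
      · exact Or.inr hv
    · exact Or.inl hu

lemma gad1 : ∀ i i' : Fin 4, ¬(i = i' ∨ ((i:ℕ) < 2 ∧ 2 ≤ (i':ℕ))) →
    (i' = sigA i ∨ ((i':ℕ) < 2 ∧ 2 ≤ (sigA i : ℕ))) := by decide

lemma gad2 : ∀ i i' : Fin 4, (i = i' ∨ ((i:ℕ) < 2 ∧ 2 ≤ (i':ℕ))) →
    ¬(sigA i' = i ∨ ((sigA i' : ℕ) < 2 ∧ 2 ≤ (i:ℕ))) := by decide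

lemma gad3 : ∀ i i' : Fin 4, (¬(i' = sigA i ∨ ((i':ℕ) < 2 ∧ 2 ≤ (sigA i : ℕ)))) ↔
    (i = i' ∨ ((i:ℕ) < 2 ∧ 2 ≤ (i':ℕ))) := by decide

lemma gad4 : ∀ i i' : Fin 4,
    (¬(sigB (sigA i) = sigB i' ∨ ((sigB (sigA i) : ℕ) < 2 ∧ 2 ≤ (sigB i' : ℕ)))) ↔
    (i = i' ∨ ((i:ℕ) < 2 ∧ 2 ≤ (i':ℕ))) := by decide

lemma clsP_aPf (h : CtxP le c E a b) (u : XP X K) : clsP c (aPf a u) = clsP c u := by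
  rcases u with x | g
  · exact congrArg some (h.hac x)
  · rfl

lemma clsP_bPf (h : CtxP le c E a b) (u : XP X K) : clsP c (bPf b u) = clsP c u := by
  rcases u with x | g
  · exact congrArg some (h.hbc x)
  · rfl

lemma aPf_surj (h : CtxP le c E a b) : Function.Surjective (aPf (K := K) a) := by
  rintro (y | g)
  · obtain ⟨x, rfl⟩ := h.has y
    exact ⟨Sum.inl x, rfl⟩
  · exact ⟨Sum.inr (g.1, sigA g.2), by simp [aPf, sigA_invol]⟩

lemma aPf_inj (h : CtxP le c E a b) : Function.Injective (aPf (K := K) a) := by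
  rintro (x | g) (x' | g') heq <;> simp [aPf] at heq
  · exact congrArg Sum.inl (h.hai heq)
  · refine congrArg Sum.inr (Prod.ext heq.1 ?_)
    have := heq.2
    have h4 : ∀ i i' : Fin 4, sigA i = sigA i' → i = i' := by decide
    exact h4 _ _ this

lemma bPf_invol (h : CtxP le c E a b) (u : XP X K) : bPf b (bPf b u) = u := by
  rcases u with x | g
  · exact congrArg Sum.inl (h.hbi x)
  · simp [bPf, sigB_invol]

lemma snegP (h : CtxP le c E a b) {R : Set (X × X)} (hR : R ⊆ E) :
    snegRel (EPr c) (aPf a) (injP R ∪ MPr le c) = injP (K := K) (snegRel E a R) ∪ MPr le c := by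
  ext ⟨v, w⟩
  simp only [Set.mem_union]
  rw [mem_snegRel]
  constructor
  · rintro ⟨z, ⟨hzE, hzT⟩, rfl⟩
    rw [Set.mem_union, not_or] at hzT
    obtain ⟨hz1, hz2⟩ := hzT
    rcases z with x | g <;> rcases v with y | g'
    · refine Or.inl ⟨y, a x, rfl, rfl, mem_snegRel.mpr ⟨x, ⟨?_, fun hxy => hz1 ⟨x, y, rfl, rfl, hxy⟩⟩, rfl⟩⟩
      exact (h.hE x y).2 (Option.some.inj hzE)
    · -- z = inl x, v = inr g'
      refine Or.inr ⟨⟨?_, ?_⟩, Or.inl rfl⟩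
      · rw [congrArg some (h.hac x)]; exact hzE.symm
      · by_contra hlt
        exact hz2 ⟨⟨hzE, by omega⟩, Or.inr rfl⟩
    · -- z = inr g, v = inl y
      refine Or.inr ⟨⟨hzE.symm, ?_⟩, Or.inr rfl⟩
      · show 2 ≤ ((sigA g.2 : Fin 4) : ℕ)
        rw [sigA_hi]
        by_contra hlt
        exact hz2 ⟨⟨hzE, by omega⟩, Or.inl rfl⟩
    · -- z = inr g, v = inr g'
      have hn : ¬(g.2 = g'.2 ∨ ((g.2:ℕ) < 2 ∧ 2 ≤ (g'.2:ℕ))) := by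
        intro hc
        exact hz2 ⟨⟨hzE, hc⟩, Or.inl rfl⟩
      exact Or.inr ⟨⟨hzE.symm, gad1 g.2 g'.2 hn⟩, Or.inl rfl⟩
  · rintro (⟨y, w', rfl, rfl, hsw⟩ | hM)
    · obtain ⟨x, ⟨hxE, hxR⟩, rfl⟩ := mem_snegRel.mp hsw
      refine ⟨Sum.inl x, ⟨congrArg some ((h.hE x y).1 hxE), ?_⟩, rfl⟩
      rw [Set.mem_union, not_or]
      refine ⟨?_, ?_⟩
      · rintro ⟨x', y', hx, hy, hxy⟩
        cases Sum.inl_injective hx; cases Sum.inl_injective hy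
        exact hxR hxy
      · rintro ⟨-, hr | hr⟩ <;> simp [Sum.isRight] at hr
    · have hnle := hM.1
      rcases v with y | g <;> rcases w with y' | g'
      · exact absurd hM.2 (by simp [Sum.isRight])
      · -- v = inl y, w = inr g'
        obtain ⟨hcl, hhi⟩ := hnle
        refine ⟨Sum.inr (g'.1, sigA g'.2), ⟨hcl.symm, ?_⟩, by simp [aPf, sigA_invol]⟩
        rw [Set.mem_union, not_or]
        refine ⟨by rintro ⟨x', y', hx, -, -⟩; simp [aPf, bPf] at hx, ?_⟩
        rintro ⟨⟨-, hlt⟩, -⟩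
        have hx : ((sigA g'.2 : Fin 4) : ℕ) < 2 := hlt
        rw [sigA_lo] at hx
        omega
      · -- v = inr g, w = inl y'
        obtain ⟨hcl, hlo⟩ := hnle
        obtain ⟨x, rfl⟩ := h.has y'
        refine ⟨Sum.inl x, ⟨?_, ?_⟩, rfl⟩
        · show some (c x) = g.1
          rw [hcl]
          exact congrArg some (h.hac x).symm
        · rw [Set.mem_union, not_or]
          refine ⟨by rintro ⟨x', y', -, hy, -⟩; simp [aPf, bPf] at hy, ?_⟩
          rintro ⟨⟨-, h2⟩, -⟩
          omega
      · -- v = inr g, w = inr g'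
        obtain ⟨hcl, hcond⟩ := hnle
        refine ⟨Sum.inr (g.1, sigA g'.2), ⟨rfl, ?_⟩, by simp [aPf, sigA_invol, hcl, Prod.ext_iff]⟩
        rw [Set.mem_union, not_or]
        refine ⟨by rintro ⟨x', y', hx, -, -⟩; simp [aPf, bPf] at hx, ?_⟩
        rintro ⟨⟨-, hc⟩, -⟩
        exact gad2 g.2 g'.2 hcond hc

lemma rnegP (h : CtxP le c E a b) {R : Set (X × X)} (hR : R ⊆ E) :
    rnegRel (EPr c) (aPf a) (injP R ∪ MPr le c) = injP (K := K) (rnegRel E a R) ∪ MPr le c := by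
  ext ⟨u, w⟩
  simp only [Set.mem_union]
  rw [mem_rnegRel]
  constructor
  · rintro ⟨hE', hT⟩
    rw [Set.mem_union, not_or] at hT
    rcases u with x | g <;> rcases w with y | g'
    · refine Or.inl ⟨x, y, rfl, rfl, mem_rnegRel.mpr ⟨?_, fun hr => hT.1 ⟨y, a x, rfl, rfl, hr⟩⟩⟩
      exact (h.hE y (a x)).2 (Option.some.inj hE')
    · -- u = inl x, w = inr g'
      refine Or.inr ⟨⟨?_, ?_⟩, Or.inr rfl⟩
      · have : g'.1 = some (c (a x)) := hE'
        rw [this]; exact congrArg some (h.hac x).symm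
      · by_contra hlt
        exact hT.2 ⟨⟨hE', by omega⟩, Or.inl rfl⟩
    · -- u = inr g, w = inl y
      have hE'' : some (c y) = g.1 := hE'
      refine Or.inr ⟨⟨hE''.symm, ?_⟩, Or.inl rfl⟩
      by_contra hge
      refine hT.2 ⟨⟨hE'', ?_⟩, Or.inr rfl⟩
      show 2 ≤ ((sigA g.2 : Fin 4) : ℕ)
      rw [sigA_hi]; omega
    · -- u = inr g, w = inr g'
      have hE'' : g'.1 = g.1 := hE'
      refine Or.inr ⟨⟨hE''.symm, ?_⟩, Or.inl rfl⟩
      refine (gad3 g.2 g'.2).1 ?_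
      intro hc
      exact hT.2 ⟨⟨hE'', hc⟩, Or.inl rfl⟩
  · rintro (⟨x, y, rfl, rfl, hr⟩ | hM)
    · obtain ⟨hrE, hrR⟩ := mem_rnegRel.mp hr
      refine ⟨congrArg some ((h.hE y (a x)).1 hrE), ?_⟩
      rw [Set.mem_union, not_or]
      constructor
      · rintro ⟨y', w', hy, hw, hyw⟩
        cases Sum.inl_injective hy; cases Sum.inl_injective hw
        exact hrR hyw
      · rintro ⟨-, hz | hz⟩ <;> simp [Sum.isRight, aPf, bPf] at hz
    · have hnle := hM.1
      rcases u with x | g <;> rcases w with y | g'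
      · exact absurd hM.2 (by simp [Sum.isRight])
      · -- u = inl x, w = inr g' ∈ M
        obtain ⟨hcl, hhi⟩ := hnle
        constructor
        · show g'.1 = some (c (a x))
          rw [← hcl]; exact congrArg some (h.hac x).symm
        · rw [Set.mem_union, not_or]
          refine ⟨by rintro ⟨y', w', hy, -, -⟩; simp [aPf, bPf] at hy, ?_⟩
          rintro ⟨⟨-, hlt⟩, -⟩
          have : (g'.2 : ℕ) < 2 := hlt
          omega
      · -- u = inr g, w = inl y ∈ M
        obtain ⟨hcl, hlo⟩ := hnle
        constructor
        · exact hcl.symm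
        · rw [Set.mem_union, not_or]
          refine ⟨by rintro ⟨y', w', -, hw, -⟩; simp [aPf, bPf] at hw, ?_⟩
          rintro ⟨⟨-, hhi⟩, -⟩
          have hx : 2 ≤ ((sigA g.2 : Fin 4) : ℕ) := hhi
          rw [sigA_hi] at hx
          omega
      · -- u = inr g, w = inr g' ∈ M
        obtain ⟨hcl, hcond⟩ := hnle
        constructor
        · exact hcl.symm
        · rw [Set.mem_union, not_or]
          refine ⟨by rintro ⟨y', w', hy, -, -⟩; simp [aPf, bPf] at hy, ?_⟩
          rintro ⟨⟨-, hc⟩, -⟩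
          exact (gad3 g.2 g'.2).2 hcond hc

lemma qnegP (h : CtxP le c E a b) {R : Set (X × X)} (hR : R ⊆ E) :
    qnegRel (EPr c) (aPf a) (bPf b) (injP R ∪ MPr le c)
      = injP (K := K) (qnegRel E a b R) ∪ MPr le c := by
  ext ⟨u, w⟩
  simp only [Set.mem_union]
  rw [mem_qnegRel (bPf_invol h)]
  constructor
  · rintro ⟨hE', hT⟩
    rw [Set.mem_union, not_or] at hT
    rcases u with x | g <;> rcases w with y | g'
    · refine Or.inl ⟨x, y, rfl, rfl, (mem_qnegRel h.hbi).mpr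
        ⟨?_, fun hr => hT.1 ⟨b (a x), b y, rfl, rfl, hr⟩⟩⟩
      exact (h.hE _ _).2 (Option.some.inj hE')
    · -- u = inl x, w = inr g'
      refine Or.inr ⟨⟨?_, ?_⟩, Or.inr rfl⟩
      · have hc : some (c (b (a x))) = g'.1 := hE'
        rw [← hc, h.hbc, h.hac]
      · by_contra hlt
        refine hT.2 ⟨⟨hE', ?_⟩, Or.inr rfl⟩
        show 2 ≤ ((sigB g'.2 : Fin 4) : ℕ)
        rw [sigB_hi]; omega
    · -- u = inr g, w = inl y
      have hc : g.1 = some (c (b y)) := hE'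
      refine Or.inr ⟨⟨by rw [hc, h.hbc], ?_⟩, Or.inl rfl⟩
      by_contra hge
      refine hT.2 ⟨⟨hE', ?_⟩, Or.inl rfl⟩
      show ((sigB (sigA g.2) : Fin 4) : ℕ) < 2
      rw [sigB_lo, sigA_hi]; omega
    · -- u = inr g, w = inr g'
      have hc : g.1 = g'.1 := hE'
      refine Or.inr ⟨⟨hc, ?_⟩, Or.inl rfl⟩
      refine (gad4 g.2 g'.2).1 ?_
      intro hcc
      exact hT.2 ⟨⟨hE', hcc⟩, Or.inl rfl⟩
  · rintro (⟨x, y, rfl, rfl, hr⟩ | hM)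
    · obtain ⟨hrE, hrR⟩ := (mem_qnegRel h.hbi).mp hr
      refine ⟨congrArg some ((h.hE _ _).1 hrE), ?_⟩
      rw [Set.mem_union, not_or]
      constructor
      · rintro ⟨y', w', hy, hw, hyw⟩
        cases Sum.inl_injective hy; cases Sum.inl_injective hw
        exact hrR hyw
      · rintro ⟨-, hz | hz⟩ <;> simp [Sum.isRight, aPf, bPf] at hz
    · have hnle := hM.1
      rcases u with x | g <;> rcases w with y | g'
      · exact absurd hM.2 (by simp [Sum.isRight])
      · -- u = inl x, w = inr g' ∈ M
        obtain ⟨hcl, hhi⟩ := hnle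
        constructor
        · show some (c (b (a x))) = g'.1
          rw [h.hbc, h.hac]; exact hcl
        · rw [Set.mem_union, not_or]
          refine ⟨by rintro ⟨y', w', -, hw, -⟩; simp [bPf] at hw, ?_⟩
          rintro ⟨⟨-, hlt⟩, -⟩
          have hx : 2 ≤ ((sigB g'.2 : Fin 4) : ℕ) := hlt
          rw [sigB_hi] at hx
          omega
      · -- u = inr g, w = inl y ∈ M
        obtain ⟨hcl, hlo⟩ := hnle
        constructor
        · show g.1 = some (c (b y))
          rw [h.hbc]; exact hcl
        · rw [Set.mem_union, not_or]
          refine ⟨by rintro ⟨y', w', hy, -, -⟩; simp [bPf, aPf] at hy, ?_⟩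
          rintro ⟨⟨-, hhi⟩, -⟩
          have hx : ((sigB (sigA g.2) : Fin 4) : ℕ) < 2 := hhi
          rw [sigB_lo, sigA_hi] at hx
          omega
      · -- u = inr g, w = inr g' ∈ M
        obtain ⟨hcl, hcond⟩ := hnle
        refine ⟨hcl, ?_⟩
        rw [Set.mem_union, not_or]
        refine ⟨by rintro ⟨y', w', hy, -, -⟩; simp [aPf, bPf] at hy, ?_⟩
        rintro ⟨⟨-, hc⟩, -⟩
        exact (gad4 g.2 g'.2).2 hcond hc

lemma snegP_empty (h : CtxP le c E a b) :
    snegRel (EPr c) (aPf a) (∅ : Set (XP X K × XP X K)) = EPr c := by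
  ext ⟨v, w⟩
  rw [mem_snegRel]
  constructor
  · rintro ⟨z, ⟨hz, -⟩, rfl⟩
    show clsP c v = clsP c (aPf a z)
    rw [clsP_aPf h]
    exact hz.symm
  · intro hm
    obtain ⟨z, rfl⟩ := aPf_surj h w
    exact ⟨z, ⟨((clsP_aPf h z).symm.trans hm.symm : clsP c z = clsP c v),
      Set.notMem_empty _⟩, rfl⟩

lemma snegP_EP (h : CtxP le c E a b) :
    snegRel (EPr c) (aPf a) (EPr (K := K) c) = ∅ := by
  ext ⟨v, w⟩
  rw [mem_snegRel]
  simp only [Set.mem_empty_iff_false, iff_false]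
  rintro ⟨z, ⟨hz, hnz⟩, -⟩
  exact hnz hz

lemma rnegP_empty (h : CtxP le c E a b) :
    rnegRel (EPr c) (aPf a) (∅ : Set (XP X K × XP X K)) = EPr c := by
  ext ⟨u, w⟩
  rw [mem_rnegRel]
  constructor
  · rintro ⟨hz, -⟩
    have : clsP c w = clsP c (aPf a u) := hz
    rw [clsP_aPf h] at this
    exact this.symm
  · intro hm
    refine ⟨?_, Set.notMem_empty _⟩
    show clsP c w = clsP c (aPf a u)
    rw [clsP_aPf h]
    exact hm.symm

lemma rnegP_EP (h : CtxP le c E a b) :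
    rnegRel (EPr c) (aPf a) (EPr (K := K) c) = ∅ := by
  ext ⟨u, w⟩
  rw [mem_rnegRel]
  simp only [Set.mem_empty_iff_false, iff_false]
  rintro ⟨hz, hnz⟩
  exact hnz hz

lemma qnegP_empty (h : CtxP le c E a b) :
    qnegRel (EPr c) (aPf a) (bPf b) (∅ : Set (XP X K × XP X K)) = EPr c := by
  ext ⟨u, w⟩
  rw [mem_qnegRel (bPf_invol h)]
  constructor
  · rintro ⟨hz, -⟩
    have : clsP c (bPf b (aPf a u)) = clsP c (bPf b w) := hz
    rw [clsP_bPf h, clsP_bPf h, clsP_aPf h] at this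
    exact this
  · intro hm
    refine ⟨?_, Set.notMem_empty _⟩
    show clsP c (bPf b (aPf a u)) = clsP c (bPf b w)
    rw [clsP_bPf h, clsP_bPf h, clsP_aPf h]
    exact hm

lemma qnegP_EP (h : CtxP le c E a b) :
    qnegRel (EPr c) (aPf a) (bPf b) (EPr (K := K) c) = ∅ := by
  ext ⟨u, w⟩
  rw [mem_qnegRel (bPf_invol h)]
  simp only [Set.mem_empty_iff_false, iff_false]
  rintro ⟨hz, hnz⟩
  exact hnz hz

lemma gadA : ∀ i i' : Fin 4, (sigA i = sigA i' ∨ ((sigA i : ℕ) < 2 ∧ 2 ≤ (sigA i' : ℕ))) ↔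
    (i = i' ∨ ((i:ℕ) < 2 ∧ 2 ≤ (i':ℕ))) := by decide

lemma gadB : ∀ i i' : Fin 4, (sigB i' = sigB i ∨ ((sigB i' : ℕ) < 2 ∧ 2 ≤ (sigB i : ℕ))) ↔
    (i = i' ∨ ((i:ℕ) < 2 ∧ 2 ≤ (i':ℕ))) := by decide

lemma sigABA : ∀ i, sigA (sigB (sigA i)) = sigB i := by decide

lemma repBaseP (h : CtxP le c E a b) :
    RepBase (nleP le c) (EPr (K := K) c) (aPf a) (bPf b) where
  le_refl u := nleP_refl u h.lrefl
  le_antisymm _ _ h1 h2 := nleP_antisymm h h1 h2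
  le_trans _ _ _ h1 h2 := nleP_trans h h1 h2
  equiv := ⟨fun _ => rfl, fun e => e.symm, fun e1 e2 => e1.trans e2⟩
  le_sub _ _ h1 := nleP_cls h h1
  a_bij := ⟨aPf_inj h, aPf_surj h⟩
  a_ord := by
    rintro (x | g) (y | g')
    · exact h.haord x y
    · show (some (c x) = g'.1 ∧ _) ↔ (some (c (a x)) = g'.1 ∧ _)
      rw [h.hac]
      exact and_congr_right fun _ => (sigA_hi g'.2).symm
    · show (g.1 = some (c y) ∧ _) ↔ (g.1 = some (c (a y)) ∧ _)
      rw [h.hac]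
      exact and_congr_right fun _ => (sigA_lo g.2).symm
    · exact and_congr_right fun _ => (gadA g.2 g'.2).symm
  b_invol := bPf_invol h
  b_dual := by
    rintro (x | g) (y | g')
    · exact h.hbd x y
    · show (some (c x) = g'.1 ∧ _) ↔ (g'.1 = some (c (b x)) ∧ _)
      rw [h.hbc]
      exact ⟨fun ⟨e, hh⟩ => ⟨e.symm, by rw [show ((sigB g'.2 : Fin 4) : ℕ) < 2 ↔ _ from sigB_lo g'.2]; exact hh⟩,
        fun ⟨e, hh⟩ => ⟨e.symm, by rw [← sigB_lo g'.2]; exact hh⟩⟩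
    · show (g.1 = some (c y) ∧ _) ↔ (some (c (b y)) = g.1 ∧ _)
      rw [h.hbc]
      exact ⟨fun ⟨e, hh⟩ => ⟨e.symm, by rw [show (2 ≤ ((sigB g.2 : Fin 4) : ℕ)) ↔ _ from sigB_hi g.2]; exact hh⟩,
        fun ⟨e, hh⟩ => ⟨e.symm, by rw [← sigB_hi g.2]; exact hh⟩⟩
    · exact ⟨fun ⟨e, hh⟩ => ⟨e.symm, (gadB g.2 g'.2).2 hh⟩,
        fun ⟨e, hh⟩ => ⟨e.symm, (gadB g.2 g'.2).1 hh⟩⟩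
  a_sub u := (clsP_aPf h u).symm
  b_sub u := (clsP_bPf h u).symm
  aba := by
    rintro (x | g)
    · exact congrArg Sum.inl (h.haba x)
    · exact congrArg Sum.inr (Prod.ext rfl (sigABA g.2))

end Lemmas

end Constr

section Main

variable {L : Type u} [QRA L]

lemma car1 : (Sum.inl (1:ℤ) : ℤ ⊕ L) ∈ sklCar 3 := by
  refine ⟨⟨by norm_num, fun h => absurd h (by decide)⟩, one_ne_zero⟩

lemma carm1 : (Sum.inl (-1:ℤ) : ℤ ⊕ L) ∈ sklCar 3 := by
  refine ⟨⟨by norm_num, fun h => absurd h (by decide)⟩, by norm_num⟩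

lemma carInr (l : L) : (Sum.inr l : ℤ ⊕ L) ∈ sklCar 3 := trivial

lemma carShape (j : ℤ) (hj : j = 1 ∨ j = -1) : (Sum.inl j : ℤ ⊕ L) ∈ sklCar 3 := by
  rcases hj with rfl | rfl
  · exact car1
  · exact carm1

lemma carCases {m : ℤ ⊕ L} (hm : m ∈ sklCar 3) :
    m = Sum.inl 1 ∨ m = Sum.inl (-1) ∨ ∃ l, m = Sum.inr l := by
  rcases m with j | l
  · rcases carrier_inl hm with rfl | rfl
    · exact Or.inl rfl
    · exact Or.inr (Or.inl rfl)
  · exact Or.inr (Or.inr ⟨l, rfl⟩)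

lemma sug11 : sugMulIdx 1 1 = 1 := by norm_num [sugMulIdx]
lemma sug1m : sugMulIdx 1 (-1) = -1 := by norm_num [sugMulIdx]
lemma sugm1 : sugMulIdx (-1) 1 = -1 := by norm_num [sugMulIdx]
lemma sugmm : sugMulIdx (-1) (-1) = -1 := by norm_num [sugMulIdx]
lemma sug10 : sugMulIdx 1 0 = 1 := by norm_num [sugMulIdx]
lemma sugm0 : sugMulIdx (-1) 0 = -1 := by norm_num [sugMulIdx]
lemma sug01 : sugMulIdx 0 1 = 1 := by norm_num [sugMulIdx]
lemma sug0m : sugMulIdx 0 (-1) = -1 := by norm_num [sugMulIdx]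

lemma mainEmb {X : Type} {le : X → X → Prop} {E : Set (X × X)} {a b : X → X}
    {f : L → Set (X × X)}
    (emb : IsQRAEmbedding L Set.univ QRA.inf QRA.sup QRA.mul QRA.sneg QRA.rneg QRA.qneg
      QRA.one QRA.zero le E a b f) :
    ∃ (Y : Type) (le' : Y → Y → Prop) (E' : Set (Y × Y)) (a' b' : Y → Y)
      (f' : ℤ ⊕ L → Set (Y × Y)),
      (Finite X → Finite Y) ∧
      IsQRAEmbedding (ℤ ⊕ L) (sklCar 3) sklInf sklSup sklMul sklSneg sklRneg sklQneg
        sklOne sklZero le' E' a' b' f' := by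
  classical
  have hb := emb.base
  let sd : Setoid X := ⟨fun u v => (u, v) ∈ E, hb.equiv⟩
  let K := Quotient sd
  let c : X → K := fun x => Quotient.mk sd x
  have hE : ∀ x y, ((x, y) ∈ E ↔ c x = c y) := fun x y =>
    ⟨fun hxy => Quotient.sound hxy, fun hq => Quotient.exact hq⟩
  have ctx : CtxP le c E a b :=
    { hE := hE
      lrefl := hb.le_refl
      lantisymm := hb.le_antisymm
      ltrans := hb.le_trans
      hle := fun x y hxy => (hE x y).1 (hb.le_sub x y hxy)
      hac := fun x => ((hE x (a x)).1 (hb.a_sub x)).symm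
      hai := hb.a_bij.1
      has := hb.a_bij.2
      haord := hb.a_ord
      hbc := fun x => ((hE x (b x)).1 (hb.b_sub x)).symm
      hbi := hb.b_invol
      hbd := hb.b_dual
      haba := hb.aba }
  have hfl : ∀ l : L, f l ⊆ E := fun l => (emb.maps_up l trivial).1
  have hone_sub : oneRel le ⊆ E := by rintro ⟨x, y⟩ hp; exact hb.le_sub x y hp
  have e1 : fPf (K := K) le c f (Sum.inl (1:ℤ)) = EPr c := by norm_num [fPf]
  have em1 : fPf (K := K) le c f (Sum.inl (-1:ℤ)) = ∅ := by norm_num [fPf]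
  have einr : ∀ l : L, fPf (K := K) le c f (Sum.inr l) = injP (f l) ∪ MPr le c :=
    fun l => rfl
  have hsub : ∀ l : L, injP (K := K) (f l) ∪ MPr le c ⊆ EPr c := fun l =>
    Set.union_subset (injP_sub_EPr ctx (hfl l)) (MPr_sub_EPr ctx)
  -- witnesses for injectivity
  have w1M : ((Sum.inr ((none : Option K), (0 : Fin 4)), Sum.inr ((none : Option K), (0 : Fin 4)))
      : XP X K × XP X K) ∈ MPr le c := ⟨⟨rfl, Or.inl rfl⟩, Or.inl rfl⟩
  have w1E : ((Sum.inr ((none : Option K), (0 : Fin 4)), Sum.inr ((none : Option K), (0 : Fin 4)))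
      : XP X K × XP X K) ∈ EPr c := rfl
  have w2E : ((Sum.inr ((none : Option K), (2 : Fin 4)), Sum.inr ((none : Option K), (0 : Fin 4)))
      : XP X K × XP X K) ∈ EPr c := rfl
  have w2M : ((Sum.inr ((none : Option K), (2 : Fin 4)), Sum.inr ((none : Option K), (0 : Fin 4)))
      : XP X K × XP X K) ∉ MPr le c := by
    rintro ⟨⟨-, hc⟩, -⟩
    exact absurd hc (show ¬((2:Fin 4) = (0:Fin 4) ∨ (((2:Fin 4):ℕ) < 2 ∧ 2 ≤ ((0:Fin 4):ℕ)))
      by decide)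
  have w2I : ∀ R : Set (X × X), ((Sum.inr ((none : Option K), (2 : Fin 4)),
      Sum.inr ((none : Option K), (0 : Fin 4))) : XP X K × XP X K) ∉ injP R := by
    rintro R ⟨x, y, hx, -, -⟩
    simp at hx
  have hEne : fPf (K := K) le c f (Sum.inl (1:ℤ)) ≠ fPf le c f (Sum.inl (-1:ℤ)) := by
    rw [e1, em1]
    intro hq
    rw [hq] at w1E
    exact Set.notMem_empty _ w1E
  have hEnr : ∀ l : L, EPr (K := K) c ≠ injP (f l) ∪ MPr le c := by
    intro l hq
    rw [hq] at w2E
    rcases w2E with hj | hM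
    · exact w2I _ hj
    · exact w2M hM
  have hMnr : ∀ l : L, (∅ : Set (XP X K × XP X K)) ≠ injP (f l) ∪ MPr le c := by
    intro l hq
    have : ((Sum.inr ((none : Option K), (0 : Fin 4)), Sum.inr ((none : Option K), (0 : Fin 4)))
        : XP X K × XP X K) ∈ injP (f l) ∪ MPr le c := Or.inr w1M
    rw [← hq] at this
    exact Set.notMem_empty _ this
  have hrecover : ∀ l l' : L,
      injP (K := K) (f l) ∪ MPr le c = injP (f l') ∪ MPr le c → f l = f l' := by
    intro l l' hq
    ext ⟨x, y⟩
    constructor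
    · intro hxy
      have hmem : ((Sum.inl x, Sum.inl y) : XP X K × XP X K) ∈ injP (f l) ∪ MPr le c :=
        Or.inl ⟨x, y, rfl, rfl, hxy⟩
      rw [hq] at hmem
      rcases hmem with ⟨x', y', hx, hy, hm⟩ | hM
      · cases Sum.inl_injective hx; cases Sum.inl_injective hy; exact hm
      · rcases hM.2 with hz | hz <;> simp [Sum.isRight] at hz
    · intro hxy
      have hmem : ((Sum.inl x, Sum.inl y) : XP X K × XP X K) ∈ injP (f l') ∪ MPr le c :=
        Or.inl ⟨x, y, rfl, rfl, hxy⟩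
      rw [← hq] at hmem
      rcases hmem with ⟨x', y', hx, hy, hm⟩ | hM
      · cases Sum.inl_injective hx; cases Sum.inl_injective hy; exact hm
      · rcases hM.2 with hz | hz <;> simp [Sum.isRight] at hz
  refine ⟨XP X K, nleP le c, EPr c, aPf a, bPf b, fPf le c f, ?_, ?_⟩
  · intro hX
    haveI := hX
    haveI : Finite K := Quotient.finite sd
    haveI : Finite (Option K) :=
      Finite.of_equiv _ (Equiv.optionEquivSumPUnit.{0,0} K).symm
    exact inferInstance
  refine
    { base := repBaseP ctx
      closed_inf := ?_
      closed_sup := ?_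
      closed_mul := ?_
      closed_sneg := ?_
      closed_rneg := ?_
      closed_qneg := ?_
      one_mem := carInr _
      zero_mem := carInr _
      maps_up := ?_
      inj := ?_
      map_inf := ?_
      map_sup := ?_
      map_mul := ?_
      map_sneg := ?_
      map_rneg := ?_
      map_qneg := ?_
      map_one := ?_
      map_zero := ?_ }
  · -- closed_inf
    intro m hm m' hm'
    rcases carCases hm with rfl | rfl | ⟨l, rfl⟩ <;>
      rcases carCases hm' with rfl | rfl | ⟨l', rfl⟩ <;>
      simp only [sklInf] <;>
      first
        | exact carInr _
        | (apply carShape; omega)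
        | (norm_num; exact carInr _)
  · -- closed_sup
    intro m hm m' hm'
    rcases carCases hm with rfl | rfl | ⟨l, rfl⟩ <;>
      rcases carCases hm' with rfl | rfl | ⟨l', rfl⟩ <;>
      simp only [sklSup] <;>
      first
        | exact carInr _
        | (apply carShape; omega)
        | (norm_num; exact carInr _)
  · -- closed_mul
    intro m hm m' hm'
    rcases carCases hm with rfl | rfl | ⟨l, rfl⟩ <;>
      rcases carCases hm' with rfl | rfl | ⟨l', rfl⟩ <;>
      simp only [sklMul, sug11, sug1m, sugm1, sugmm, sug10, sugm0, sug01, sug0m] <;>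
      first
        | exact carInr _
        | exact car1
        | exact carm1
  · -- closed_sneg
    intro m hm
    rcases carCases hm with rfl | rfl | ⟨l, rfl⟩ <;> simp only [sklSneg] <;>
      first
        | exact carInr _
        | (apply carShape; omega)
  · -- closed_rneg
    intro m hm
    rcases carCases hm with rfl | rfl | ⟨l, rfl⟩ <;> simp only [sklRneg] <;>
      first
        | exact carInr _
        | (apply carShape; omega)
  · -- closed_qneg
    intro m hm
    rcases carCases hm with rfl | rfl | ⟨l, rfl⟩ <;> simp only [sklQneg] <;>
      first
        | exact carInr _
        | (apply carShape; omega)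
  · -- maps_up
    intro m hm
    rcases carCases hm with rfl | rfl | ⟨l, rfl⟩
    · rw [e1]; exact upP_EP
    · rw [em1]; exact upP_empty
    · exact upP ctx (emb.maps_up l trivial)
  · -- inj
    intro m hm m' hm' heq
    rcases carCases hm with rfl | rfl | ⟨l, rfl⟩ <;>
      rcases carCases hm' with rfl | rfl | ⟨l', rfl⟩
    · rfl
    · exact absurd heq hEne
    · rw [e1, einr] at heq; exact absurd heq (hEnr l')
    · exact absurd heq.symm hEne
    · rfl
    · rw [em1, einr] at heq; exact absurd heq (hMnr l')
    · rw [e1, einr] at heq; exact absurd heq.symm (hEnr l)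
    · rw [em1, einr] at heq; exact absurd heq.symm (hMnr l)
    · rw [einr, einr] at heq
      exact congrArg Sum.inr (emb.inj trivial trivial (hrecover l l' heq))
  · -- map_inf
    intro m hm m' hm'
    rcases carCases hm with rfl | rfl | ⟨l, rfl⟩ <;>
      rcases carCases hm' with rfl | rfl | ⟨l', rfl⟩
    · rw [show sklInf (Sum.inl (1:ℤ)) (Sum.inl (1:ℤ)) = (Sum.inl (1:ℤ) : ℤ ⊕ L) by
        norm_num [sklInf], e1]
      exact (Set.inter_self _).symm
    · rw [show sklInf (Sum.inl (1:ℤ)) (Sum.inl (-1:ℤ)) = (Sum.inl (-1:ℤ) : ℤ ⊕ L) by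
        norm_num [sklInf], em1, e1]
      simp
    · rw [show sklInf (Sum.inl (1:ℤ)) (Sum.inr l') = (Sum.inr l' : ℤ ⊕ L) by
        norm_num [sklInf], e1, einr]
      exact (Set.inter_eq_self_of_subset_right (hsub l')).symm
    · rw [show sklInf (Sum.inl (-1:ℤ)) (Sum.inl (1:ℤ)) = (Sum.inl (-1:ℤ) : ℤ ⊕ L) by
        norm_num [sklInf], em1, e1]
      simp
    · rw [show sklInf (Sum.inl (-1:ℤ)) (Sum.inl (-1:ℤ)) = (Sum.inl (-1:ℤ) : ℤ ⊕ L) by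
        norm_num [sklInf], em1]
      simp
    · rw [show sklInf (Sum.inl (-1:ℤ)) (Sum.inr l') = (Sum.inl (-1:ℤ) : ℤ ⊕ L) by
        norm_num [sklInf], em1]
      simp
    · rw [show sklInf (Sum.inr l) (Sum.inl (1:ℤ)) = (Sum.inr l : ℤ ⊕ L) by
        norm_num [sklInf], e1, einr]
      exact (Set.inter_eq_self_of_subset_left (hsub l)).symm
    · rw [show sklInf (Sum.inr l) (Sum.inl (-1:ℤ)) = (Sum.inl (-1:ℤ) : ℤ ⊕ L) by
        norm_num [sklInf], em1]
      simp
    · rw [show sklInf (Sum.inr l) (Sum.inr l') = (Sum.inr (QRA.inf l l') : ℤ ⊕ L) from rfl,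
        einr, einr, einr, emb.map_inf l trivial l' trivial, injP_inter]
      ext p
      simp only [Set.mem_union, Set.mem_inter_iff]
      tauto
  · -- map_sup
    intro m hm m' hm'
    rcases carCases hm with rfl | rfl | ⟨l, rfl⟩ <;>
      rcases carCases hm' with rfl | rfl | ⟨l', rfl⟩
    · rw [show sklSup (Sum.inl (1:ℤ)) (Sum.inl (1:ℤ)) = (Sum.inl (1:ℤ) : ℤ ⊕ L) by
        norm_num [sklSup], e1]
      simp
    · rw [show sklSup (Sum.inl (1:ℤ)) (Sum.inl (-1:ℤ)) = (Sum.inl (1:ℤ) : ℤ ⊕ L) by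
        norm_num [sklSup], e1, em1]
      simp
    · rw [show sklSup (Sum.inl (1:ℤ)) (Sum.inr l') = (Sum.inl (1:ℤ) : ℤ ⊕ L) by
        norm_num [sklSup], e1, einr]
      exact (Set.union_eq_self_of_subset_right (hsub l')).symm
    · rw [show sklSup (Sum.inl (-1:ℤ)) (Sum.inl (1:ℤ)) = (Sum.inl (1:ℤ) : ℤ ⊕ L) by
        norm_num [sklSup], e1, em1]
      simp
    · rw [show sklSup (Sum.inl (-1:ℤ)) (Sum.inl (-1:ℤ)) = (Sum.inl (-1:ℤ) : ℤ ⊕ L) by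
        norm_num [sklSup], em1]
      simp
    · rw [show sklSup (Sum.inl (-1:ℤ)) (Sum.inr l') = (Sum.inr l' : ℤ ⊕ L) by
        norm_num [sklSup], em1, einr]
      simp
    · rw [show sklSup (Sum.inr l) (Sum.inl (1:ℤ)) = (Sum.inl (1:ℤ) : ℤ ⊕ L) by
        norm_num [sklSup], e1, einr]
      exact (Set.union_eq_self_of_subset_left (hsub l)).symm
    · rw [show sklSup (Sum.inr l) (Sum.inl (-1:ℤ)) = (Sum.inr l : ℤ ⊕ L) by
        norm_num [sklSup], em1, einr]
      simp
    · rw [show sklSup (Sum.inr l) (Sum.inr l') = (Sum.inr (QRA.sup l l') : ℤ ⊕ L) from rfl,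
        einr, einr, einr, emb.map_sup l trivial l' trivial, injP_union]
      ext p
      simp only [Set.mem_union]
      tauto
  · -- map_mul
    intro m hm m' hm'
    rcases carCases hm with rfl | rfl | ⟨l, rfl⟩ <;>
      rcases carCases hm' with rfl | rfl | ⟨l', rfl⟩
    · rw [show sklMul (Sum.inl (1:ℤ)) (Sum.inl (1:ℤ)) = (Sum.inl (1:ℤ) : ℤ ⊕ L) by
        rw [show sklMul (Sum.inl (1:ℤ)) (Sum.inl (1:ℤ)) = (Sum.inl (sugMulIdx 1 1) : ℤ ⊕ L) from rfl, sug11], e1]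
      exact compP_EP_EP.symm
    · rw [show sklMul (Sum.inl (1:ℤ)) (Sum.inl (-1:ℤ)) = (Sum.inl (-1:ℤ) : ℤ ⊕ L) by
        rw [show sklMul (Sum.inl (1:ℤ)) (Sum.inl (-1:ℤ)) = (Sum.inl (sugMulIdx 1 (-1)) : ℤ ⊕ L) from rfl, sug1m], em1, e1]
      exact (rcomp_empty_right _).symm
    · rw [show sklMul (Sum.inl (1:ℤ)) (Sum.inr l') = (Sum.inl (1:ℤ) : ℤ ⊕ L) by
        rw [show sklMul (Sum.inl (1:ℤ)) (Sum.inr l') = (Sum.inl (sugMulIdx 1 0) : ℤ ⊕ L) from rfl, sug10], e1, einr]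
      exact (compP_EP_left ctx (hfl l')).symm
    · rw [show sklMul (Sum.inl (-1:ℤ)) (Sum.inl (1:ℤ)) = (Sum.inl (-1:ℤ) : ℤ ⊕ L) by
        rw [show sklMul (Sum.inl (-1:ℤ)) (Sum.inl (1:ℤ)) = (Sum.inl (sugMulIdx (-1) 1) : ℤ ⊕ L) from rfl, sugm1], em1, e1]
      exact (rcomp_empty_left _).symm
    · rw [show sklMul (Sum.inl (-1:ℤ)) (Sum.inl (-1:ℤ)) = (Sum.inl (-1:ℤ) : ℤ ⊕ L) by
        rw [show sklMul (Sum.inl (-1:ℤ)) (Sum.inl (-1:ℤ)) = (Sum.inl (sugMulIdx (-1) (-1)) : ℤ ⊕ L) from rfl, sugmm], em1]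
      exact (rcomp_empty_left _).symm
    · rw [show sklMul (Sum.inl (-1:ℤ)) (Sum.inr l') = (Sum.inl (-1:ℤ) : ℤ ⊕ L) by
        rw [show sklMul (Sum.inl (-1:ℤ)) (Sum.inr l') = (Sum.inl (sugMulIdx (-1) 0) : ℤ ⊕ L) from rfl, sugm0], em1]
      exact (rcomp_empty_left _).symm
    · rw [show sklMul (Sum.inr l) (Sum.inl (1:ℤ)) = (Sum.inl (1:ℤ) : ℤ ⊕ L) by
        rw [show sklMul (Sum.inr l) (Sum.inl (1:ℤ)) = (Sum.inl (sugMulIdx 0 1) : ℤ ⊕ L) from rfl, sug01], e1, einr]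
      exact (compP_EP_right ctx (hfl l)).symm
    · rw [show sklMul (Sum.inr l) (Sum.inl (-1:ℤ)) = (Sum.inl (-1:ℤ) : ℤ ⊕ L) by
        rw [show sklMul (Sum.inr l) (Sum.inl (-1:ℤ)) = (Sum.inl (sugMulIdx 0 (-1)) : ℤ ⊕ L) from rfl, sug0m], em1]
      exact (rcomp_empty_right _).symm
    · rw [show sklMul (Sum.inr l) (Sum.inr l') = (Sum.inr (QRA.mul l l') : ℤ ⊕ L) from rfl,
        einr, einr, einr, emb.map_mul l trivial l' trivial]
      exact (compP ctx (hfl l) (hfl l')).symm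
  · -- map_sneg
    intro m hm
    rcases carCases hm with rfl | rfl | ⟨l, rfl⟩
    · rw [show sklSneg (Sum.inl (1:ℤ)) = (Sum.inl (-1:ℤ) : ℤ ⊕ L) from rfl, em1, e1]
      exact (snegP_EP ctx).symm
    · rw [show sklSneg (Sum.inl (-1:ℤ)) = (Sum.inl (1:ℤ) : ℤ ⊕ L) by
        norm_num [sklSneg], e1, em1]
      exact (snegP_empty ctx).symm
    · rw [show sklSneg (Sum.inr l) = (Sum.inr (QRA.sneg l) : ℤ ⊕ L) from rfl,
        einr, einr, emb.map_sneg l trivial]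
      exact (snegP ctx (hfl l)).symm
  · -- map_rneg
    intro m hm
    rcases carCases hm with rfl | rfl | ⟨l, rfl⟩
    · rw [show sklRneg (Sum.inl (1:ℤ)) = (Sum.inl (-1:ℤ) : ℤ ⊕ L) from rfl, em1, e1]
      exact (rnegP_EP ctx).symm
    · rw [show sklRneg (Sum.inl (-1:ℤ)) = (Sum.inl (1:ℤ) : ℤ ⊕ L) by
        norm_num [sklRneg], e1, em1]
      exact (rnegP_empty ctx).symm
    · rw [show sklRneg (Sum.inr l) = (Sum.inr (QRA.rneg l) : ℤ ⊕ L) from rfl,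
        einr, einr, emb.map_rneg l trivial]
      exact (rnegP ctx (hfl l)).symm
  · -- map_qneg
    intro m hm
    rcases carCases hm with rfl | rfl | ⟨l, rfl⟩
    · rw [show sklQneg (Sum.inl (1:ℤ)) = (Sum.inl (-1:ℤ) : ℤ ⊕ L) from rfl, em1, e1]
      exact (qnegP_EP ctx).symm
    · rw [show sklQneg (Sum.inl (-1:ℤ)) = (Sum.inl (1:ℤ) : ℤ ⊕ L) by
        norm_num [sklQneg], e1, em1]
      exact (qnegP_empty ctx).symm
    · rw [show sklQneg (Sum.inr l) = (Sum.inr (QRA.qneg l) : ℤ ⊕ L) from rfl,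
        einr, einr, emb.map_qneg l trivial]
      exact (qnegP ctx (hfl l)).symm
  · -- map_one
    rw [show (sklOne : ℤ ⊕ L) = Sum.inr QRA.one from rfl, einr, emb.map_one]
    exact oneP_eq.symm
  · -- map_zero
    rw [show (sklZero : ℤ ⊕ L) = Sum.inr QRA.zero from rfl, einr, emb.map_zero]
    rw [show zeroRel le E a = rnegRel E a (oneRel le) from rfl]
    rw [show zeroRel (nleP le c) (EPr (K := K) c) (aPf a)
        = rnegRel (EPr c) (aPf a) (oneRel (nleP le c)) from rfl]
    rw [oneP_eq]
    exact (rnegP ctx hone_sub).symm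

end Main

end S3RepAux

/-- If `L` is a (finitely) representable distributive quasi
relation algebra, then the nested sum `S₃[L]` of the three-element Sugihara
chain `S₃` and `L` is a (finitely) representable distributive quasi relation
algebra. -/
theorem S3_nestedSum_representable {L : Type u} [QRA L]
    (hdistL : ∀ x y z : L, QRA.inf x (QRA.sup y z) = QRA.sup (QRA.inf x y) (QRA.inf x z))
    (hrep : RepresentableOn L Set.univ QRA.inf QRA.sup QRA.mul QRA.sneg QRA.rneg QRA.qneg
      QRA.one QRA.zero) :
    (∀ x ∈ sklCar (L := L) 3, ∀ y ∈ sklCar (L := L) 3, ∀ z ∈ sklCar (L := L) 3,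
      sklInf x (sklSup y z) = sklSup (sklInf x y) (sklInf x z)) ∧
    RepresentableOn (ℤ ⊕ L) (sklCar 3) sklInf sklSup sklMul sklSneg sklRneg sklQneg
      sklOne sklZero ∧
    (FinRepresentableOn L Set.univ QRA.inf QRA.sup QRA.mul QRA.sneg QRA.rneg QRA.qneg
        QRA.one QRA.zero →
      FinRepresentableOn (ℤ ⊕ L) (sklCar 3) sklInf sklSup sklMul sklSneg sklRneg sklQneg
        sklOne sklZero) := by
  refine ⟨S3RepAux.skl_distrib hdistL, ?_, ?_⟩
  · obtain ⟨X, le, E, a, b, f, emb⟩ := hrep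
    obtain ⟨Y, le', E', a', b', f', -, emb'⟩ := S3RepAux.mainEmb emb
    exact ⟨Y, le', E', a', b', f', emb'⟩
  · rintro ⟨X2, le2, E2, a2, b2, f2, hfin, emb2⟩
    obtain ⟨Y, le', E', a', b', f', hf, emb'⟩ := S3RepAux.mainEmb emb2
    exact ⟨Y, le', E', a', b', f', hf hfin, emb'⟩
end

section
/- In the construction of X_{K[L]} from representations of K = S₃ and a representable DqRA L: (i) the map α_{K[L]} is an order automorphism of (X_{K[L]}, ≤_{X_{K[L]}}) whose graph is contained in E_{K[L]}; (ii) the map β_{K[L]} is a self-inverse dual order automorphism of (X_{K[L]}, ≤_{X_{K[L]}}) whose graph is contained in E_{K[L]}; (iii) α_{K[L]} ; β_{K[L]} ; α_{K[L]} = β_{K[L]}. -/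
/-! Both maps act factorwise on the sum `X_L ⊕ (blocks × Bool × Bool)`: as `α_L`, `β_L` on `X_L`,
and on the copies of `X_K` by negating one of the two Boolean flags while keeping the block.
Negating the "which element" flag preserves the order between copies, negating the
"upper or lower copy" flag reverses it, and both maps preserve blocks, so each required property
reduces to the corresponding property of `α_L`, `β_L` plus a finite case check on the flags. -/

universe u v

variable {XL : Type}

/-- The `E_L`-blocks of `X_L` (as a quotient of `X_L`). -/
def BlkQ (EL : Set (XL × XL)) : Type := Quot (fun u v : XL => (u, v) ∈ EL)

/-- The block of an element of `X_L`. -/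
def blkMk (EL : Set (XL × XL)) (u : XL) : BlkQ EL :=
  Quot.mk (fun u v : XL => (u, v) ∈ EL) u

/-- The carrier of `X_{K[L]}` for `K = S₃`: `X_L` together with, for each
`E_L`-block `[z]`, an upper copy `^{[z]}X_K` and a lower copy `_{[z]}X_K` of the
two-element antichain `X_K = {x, y}`.  An element of a copy is encoded as
`(block, upper?, y?)`. -/
abbrev XKL (EL : Set (XL × XL)) : Type := XL ⊕ (BlkQ EL × Bool × Bool)

/-- The block of an element of `X_{K[L]}`. -/
def blkOf (EL : Set (XL × XL)) : XKL EL → BlkQ EL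
  | Sum.inl u => blkMk EL u
  | Sum.inr q => q.1

/-- The equivalence relation `E_{K[L]}`: the union of the squares
`([z] ∪ ^{[z]}X_K ∪ _{[z]}X_K)²` over the blocks `[z]`. -/
def EKL (EL : Set (XL × XL)) : Set (XKL EL × XKL EL) :=
  {p | blkOf EL p.1 = blkOf EL p.2}

/-- The order `≤_{X_{K[L]}}`: the union of `≤_{X_L}`, the (discrete) orders on
all the copies of `X_K`, and the pairs `[z] × ^{[z]}X_K`, `_{[z]}X_K × [z]`
and `_{[z]}X_K × ^{[z]}X_K` for each block `[z]`. -/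
def leKL (EL : Set (XL × XL)) (leL : XL → XL → Prop) : XKL EL → XKL EL → Prop
  | Sum.inl u, Sum.inl v => leL u v
  | Sum.inl u, Sum.inr q => q.2.1 = true ∧ blkMk EL u = q.1
  | Sum.inr q, Sum.inl v => q.2.1 = false ∧ blkMk EL v = q.1
  | Sum.inr q, Sum.inr q' => q = q' ∨ (q.1 = q'.1 ∧ q.2.1 = false ∧ q'.2.1 = true)

/-- The order automorphism `α_{K[L]}`: `α_L` on `X_L`, and `α_K` (swapping
`x` and `y`) within each copy of `X_K`. -/
def aKL (EL : Set (XL × XL)) (aL : XL → XL) : XKL EL → XKL EL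
  | Sum.inl u => Sum.inl (aL u)
  | Sum.inr q => Sum.inr (q.1, q.2.1, !q.2.2)

/-- The dual order automorphism `β_{K[L]}`: `β_L` on `X_L`, and (since
`β_K = id`) swapping the upper and lower copies of `X_K` of each block. -/
def bKL (EL : Set (XL × XL)) (bL : XL → XL) : XKL EL → XKL EL
  | Sum.inl u => Sum.inl (bL u)
  | Sum.inr q => Sum.inr (q.1, !q.2.1, q.2.2)

section Construction

variable {EL : Set (XL × XL)} {leL : XL → XL → Prop} {aL bL : XL → XL}

theorem aKL_eq_sumMap (EL : Set (XL × XL)) (aL : XL → XL) :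
    aKL EL aL = Sum.map aL fun q => (q.1, q.2.1, !q.2.2) := by
  funext p; cases p <;> rfl

theorem aKL_bijective (ha : Function.Bijective aL) : Function.Bijective (aKL EL aL) := by
  rw [aKL_eq_sumMap]
  refine ha.sumMap (Function.Involutive.bijective fun q => ?_)
  simp

theorem bKL_involutive (hb : Function.Involutive bL) : Function.Involutive (bKL EL bL) := by
  rintro (u | q) <;> simp [bKL, hb _]

theorem blkMk_apply_eq {f : XL → XL} (hf : ∀ u, (u, f u) ∈ EL) (u : XL) :
    blkMk EL (f u) = blkMk EL u :=
  (Quot.sound (hf u)).symm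

theorem mem_EKL_aKL (ha : ∀ u, (u, aL u) ∈ EL) (p : XKL EL) : (p, aKL EL aL p) ∈ EKL EL := by
  cases p <;> simp [EKL, aKL, blkOf, blkMk_apply_eq ha]

theorem mem_EKL_bKL (hb : ∀ u, (u, bL u) ∈ EL) (p : XKL EL) : (p, bKL EL bL p) ∈ EKL EL := by
  cases p <;> simp [EKL, bKL, blkOf, blkMk_apply_eq hb]

theorem leKL_aKL_iff (hle : ∀ u v, leL u v ↔ leL (aL u) (aL v)) (ha : ∀ u, (u, aL u) ∈ EL)
    (p q : XKL EL) : leKL EL leL p q ↔ leKL EL leL (aKL EL aL p) (aKL EL aL q) := by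
  rcases p with u | ⟨z, h, t⟩ <;> rcases q with v | ⟨z', h', t'⟩ <;>
    simp [aKL, leKL, blkMk_apply_eq ha, ← hle, Prod.ext_iff]

theorem leKL_bKL_iff (hle : ∀ u v, leL u v ↔ leL (bL v) (bL u)) (hb : ∀ u, (u, bL u) ∈ EL)
    (p q : XKL EL) : leKL EL leL p q ↔ leKL EL leL (bKL EL bL q) (bKL EL bL p) := by
  rcases p with u | ⟨z, h, t⟩ <;> rcases q with v | ⟨z', h', t'⟩ <;>
    simp [bKL, leKL, blkMk_apply_eq hb, ← hle, Prod.ext_iff]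
  tauto

theorem aKL_bKL_aKL (haba : ∀ u, aL (bL (aL u)) = bL u) (p : XKL EL) :
    aKL EL aL (bKL EL bL (aKL EL aL p)) = bKL EL bL p := by
  cases p <;> simp [aKL, bKL, haba]

end Construction

/-- In the construction of `X_{K[L]}` from representations of
`K = S₃` (over the two-element antichain, with `α_K` the swap and `β_K = id`)
and of a representable DqRA `L`:
(i) `α_{K[L]}` is an order automorphism of `(X_{K[L]}, ≤_{X_{K[L]}})` whose
graph is contained in `E_{K[L]}`;
(ii) `β_{K[L]}` is a self-inverse dual order automorphism of `X_{K[L]}` whose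
graph is contained in `E_{K[L]}`;
(iii) `α_{K[L]} ; β_{K[L]} ; α_{K[L]} = β_{K[L]}`. -/
theorem aKL_bKL_properties {XL : Type} (leL : XL → XL → Prop)
    (EL : Set (XL × XL)) (aL bL : XL → XL)
    (hbase : RepBase leL EL aL bL) :
    -- (i)
    (Function.Bijective (aKL EL aL) ∧
      (∀ p q : XKL EL, leKL EL leL p q ↔ leKL EL leL (aKL EL aL p) (aKL EL aL q)) ∧
      (∀ p : XKL EL, (p, aKL EL aL p) ∈ EKL EL)) ∧
    -- (ii)
    ((∀ p : XKL EL, bKL EL bL (bKL EL bL p) = p) ∧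
      Function.Bijective (bKL EL bL) ∧
      (∀ p q : XKL EL, leKL EL leL p q ↔ leKL EL leL (bKL EL bL q) (bKL EL bL p)) ∧
      (∀ p : XKL EL, (p, bKL EL bL p) ∈ EKL EL)) ∧
    -- (iii)
    (∀ p : XKL EL, aKL EL aL (bKL EL bL (aKL EL aL p)) = bKL EL bL p) :=
  have hb : Function.Involutive (bKL EL bL) := bKL_involutive hbase.b_invol
  ⟨⟨aKL_bijective hbase.a_bij, leKL_aKL_iff hbase.a_ord hbase.a_sub, mem_EKL_aKL hbase.a_sub⟩,
    ⟨hb, hb.bijective, leKL_bKL_iff hbase.b_dual hbase.b_sub, mem_EKL_bKL hbase.b_sub⟩,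
    aKL_bKL_aKL hbase.aba⟩
end

section
/- In the construction of the representation of S₃[L]: for every m ∈ (S₃∖{a₀}) ∪ L, the set ψ(m) is an up-set of the poset (E_{K[L]}, ≼), where (u₁,v₁) ≼ (u₂,v₂) iff u₂ ≤_{X_{K[L]}} u₁ and v₁ ≤_{X_{K[L]}} v₂. -/
universe u v

variable {XL : Type}

/-- Lift a binary relation on `X_L` to a binary relation on `X_{K[L]}`. -/
def liftL (EL : Set (XL × XL)) (R : Set (XL × XL)) : Set (XKL EL × XKL EL) :=
  {p | ∃ u v, (u, v) ∈ R ∧ p.1 = Sum.inl u ∧ p.2 = Sum.inl v}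

/-- The order `≤_{X_{K[L]}}` as a set of pairs. -/
def oneKL (EL : Set (XL × XL)) (leL : XL → XL → Prop) : Set (XKL EL × XKL EL) :=
  {p | leKL EL leL p.1 p.2}

/-- The relation `R = ≤_{X_{K[L]}} ∖ ≤_{X_L}`. -/
def crossR (EL : Set (XL × XL)) (leL : XL → XL → Prop) : Set (XKL EL × XKL EL) :=
  oneKL EL leL \ liftL EL (oneRel leL)

/-- The map `ψ` on `(S₃ ∖ {a₀}) ∪ L` (encoded as `Bool ⊕ L`, with
`Sum.inl true = a₁` and `Sum.inl false = a₋₁`):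
`ψ(a₁) = E_{K[L]}`, `ψ(a₋₁) = ∅`, and `ψ(m) = R ∪ φ_L(m)` for `m ∈ L`. -/
def psiMap {L : Type u} (EL : Set (XL × XL)) (leL : XL → XL → Prop)
    (φ : L → Set (XL × XL)) : Bool ⊕ L → Set (XKL EL × XKL EL)
  | Sum.inl true => EKL EL
  | Sum.inl false => ∅
  | Sum.inr m => crossR EL leL ∪ liftL EL (φ m)

/-- In the construction of the representation of `S₃[L]`:
for every `m ∈ (S₃ ∖ {a₀}) ∪ L` (encoded as `Bool ⊕ L`), the set `ψ(m)` is an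
up-set of the poset `(E_{K[L]}, ≼)`, where `(u₁,v₁) ≼ (u₂,v₂)` iff
`u₂ ≤_{X_{K[L]}} u₁` and `v₁ ≤_{X_{K[L]}} v₂`. -/
theorem psiMap_mem_upSets {XL : Type} (leL : XL → XL → Prop)
    (EL : Set (XL × XL)) (aL bL : XL → XL)
    {L : Type u} [QRA L] (φ : L → Set (XL × XL))
    (hemb : IsQRAEmbedding L Set.univ QRA.inf QRA.sup QRA.mul QRA.sneg QRA.rneg QRA.qneg
      QRA.one QRA.zero leL EL aL bL φ) :
    ∀ m : Bool ⊕ L, psiMap EL leL φ m ∈ upSets (leKL EL leL) (EKL EL) := by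
  have base := hemb.base
  -- block equality iff EL membership
  have hEL : ∀ u v : XL, blkMk EL u = blkMk EL v ↔ (u, v) ∈ EL := by
    intro u v
    unfold blkMk
    change (Quot.mk (fun u v : XL => (u, v) ∈ EL) u : Quot (fun u v : XL => (u, v) ∈ EL)) = Quot.mk _ v ↔ _
    rw [Quot.eq]
    exact Equivalence.eqvGen_iff base.equiv
  have hblk : ∀ u v : XL, (u, v) ∈ EL → blkMk EL u = blkMk EL v :=
    fun u v h => (hEL u v).mpr h
  -- leL implies block equality
  have hleb : ∀ u v : XL, leL u v → blkMk EL u = blkMk EL v :=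
    fun u v h => hblk u v (base.le_sub u v h)
  -- leKL is transitive
  have htrans : ∀ u v w : XKL EL, leKL EL leL u v → leKL EL leL v w →
      leKL EL leL u w := by
    rintro (u | c) (v | d) (w | e) h1 h2
    · exact base.le_trans _ _ _ h1 h2
    · exact ⟨h2.1, (hleb u v h1).trans h2.2⟩
    · exact absurd (h1.1.symm.trans h2.1) (by simp)
    · rcases h2 with rfl | ⟨he1, hd, he⟩
      · exact h1
      · rw [h1.1] at hd; exact absurd hd (by simp)
    · exact ⟨h1.1, (hleb v w h2).symm.trans h1.2⟩
    · exact Or.inr ⟨h1.2.symm.trans h2.2, h1.1, h2.1⟩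
    · rcases h1 with rfl | ⟨hc1, hc, hd⟩
      · exact h2
      · rw [h2.1] at hd; exact absurd hd (by simp)
    · rcases h1 with rfl | ⟨h11, h12, h13⟩
      · exact h2
      · rcases h2 with rfl | ⟨h21, h22, h23⟩
        · exact Or.inr ⟨h11, h12, h13⟩
        · rw [h13] at h22; exact absurd h22 (by simp)
  -- leKL implies block equality
  have hleblk : ∀ u v : XKL EL, leKL EL leL u v → blkOf EL u = blkOf EL v := by
    rintro (u | c) (v | d) h
    · exact hleb u v h
    · exact h.2
    · exact h.2.symm
    · rcases h with rfl | ⟨h, _⟩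
      · rfl
      · exact h
  intro m
  match m with
  | Sum.inl true =>
    exact ⟨fun p hp => hp, fun p _ q hq _ _ => hq⟩
  | Sum.inl false =>
    exact ⟨by simp [psiMap], by simp [psiMap]⟩
  | Sum.inr m =>
    have hφup := hemb.maps_up m trivial
    constructor
    · rintro ⟨u, v⟩ (⟨h1, _⟩ | ⟨u', v', hm, e1, e2⟩)
      · exact hleblk u v h1
      · simp only at e1 e2
        subst e1; subst e2
        exact hblk u' v' (hφup.1 hm)
    · rintro ⟨p1, p2⟩ hp ⟨q1, q2⟩ hq h1 h2
      rcases hp with ⟨hle, hnl⟩ | ⟨u, v, hm, e1, e2⟩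
      · -- crossR case
        have hq12 : leKL EL leL q1 q2 := htrans _ _ _ h1 (htrans _ _ _ hle h2)
        rcases q1 with u' | d
        · rcases q2 with v' | e
          · -- both inl: derive contradiction
            exfalso
            rcases p1 with u | c
            · rcases p2 with v | c'
              · exact hnl ⟨u, v, hle, rfl, rfl⟩
              · exact absurd (h2.1) (by rcases hle with ⟨h, _⟩; rw [h]; simp)
            · rcases p2 with v | c'
              · exact absurd (h1.1.symm.trans hle.1) (by simp)
              · rcases hle with rfl | ⟨_, hc, _⟩
                · exact absurd (h1.1.symm.trans h2.1) (by simp)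
                · exact absurd (h1.1.symm.trans hc) (by simp)
          · exact Or.inl ⟨hq12, by rintro ⟨a, b, _, _, h⟩; cases h⟩
        · exact Or.inl ⟨hq12, by rintro ⟨a, b, _, h, _⟩; cases h⟩
      · -- liftL case: p1 = inl u, p2 = inl v, (u,v) ∈ φ m
        simp only at e1 e2
        subst e1; subst e2
        have huv : blkMk EL u = blkMk EL v := hblk u v (hφup.1 hm)
        rcases q1 with u' | d
        · rcases q2 with v' | e
          · -- both inl
            refine Or.inr ⟨u', v', ?_, rfl, rfl⟩
            have hE' : (u', v') ∈ EL := by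
              apply (hEL u' v').mp
              exact hq
            exact hφup.2 (u, v) hm (u', v') hE' h1 h2
          · -- q2 = inr e, e upper
            refine Or.inl ⟨⟨h2.1, ?_⟩, by rintro ⟨a, b, _, _, h⟩; cases h⟩
            exact ((hleb u' u h1).trans huv).trans h2.2
        · rcases q2 with v' | e
          · -- q1 = inr d lower
            refine Or.inl ⟨⟨h1.1, ?_⟩, by rintro ⟨a, b, _, h, _⟩; cases h⟩
            exact ((hleb v v' h2).symm.trans huv.symm).trans h1.2
          · refine Or.inl ⟨Or.inr ⟨?_, h1.1, h2.1⟩,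
              by rintro ⟨a, b, _, h, _⟩; cases h⟩
            exact (h1.2.symm.trans huv).trans h2.2
end

section
/- In the construction of the representation of S₃[L]: the map ψ : (S₃∖{a₀}) ∪ L → Up(E_{K[L]}, ≼) is injective, and ψ(1_{K[L]}) = ≤_{X_{K[L]}} (where 1_{K[L]} = 1_L is the identity of the nested sum). -/
universe u v

variable {XL : Type}

/-- In the construction of the representation of `S₃[L]`:
the map `ψ : (S₃ ∖ {a₀}) ∪ L → Up(E_{K[L]}, ≼)` is injective, and
`ψ(1_{K[L]}) = ≤_{X_{K[L]}}`, where `1_{K[L]} = 1_L` is the identity of the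
nested sum. -/
theorem psiMap_injective_and_maps_one {XL : Type} [Nonempty XL]
    (leL : XL → XL → Prop) (EL : Set (XL × XL)) (aL bL : XL → XL)
    {L : Type u} [QRA L] (φ : L → Set (XL × XL))
    (hemb : IsQRAEmbedding L Set.univ QRA.inf QRA.sup QRA.mul QRA.sneg QRA.rneg QRA.qneg
      QRA.one QRA.zero leL EL aL bL φ) :
    Function.Injective (psiMap EL leL φ) ∧
      psiMap EL leL φ (Sum.inr QRA.one) = oneKL EL leL := by
  classical
  obtain ⟨u⟩ := ‹Nonempty XL›
  -- basic facts
  have crossR_no_inl : ∀ v w : XL, (Sum.inl v, Sum.inl w) ∉ crossR EL leL := by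
    rintro v w ⟨hone, hnl⟩
    exact hnl ⟨v, w, hone, rfl, rfl⟩
  have mem_liftL : ∀ (R : Set (XL × XL)) (v w : XL),
      ((Sum.inl v : XKL EL), (Sum.inl w : XKL EL)) ∈ liftL EL R ↔ (v, w) ∈ R := by
    intro R v w
    constructor
    · rintro ⟨v', w', hR, hv, hw⟩
      cases Sum.inl_injective hv; cases Sum.inl_injective hw; exact hR
    · intro hR; exact ⟨v, w, hR, rfl, rfl⟩
  -- witnesses
  have hp1E : ((Sum.inr (blkMk EL u, true, false) : XKL EL), (Sum.inl u : XKL EL)) ∈ EKL EL := rfl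
  have hp1not : ∀ m : L, ((Sum.inr (blkMk EL u, true, false) : XKL EL), (Sum.inl u : XKL EL)) ∉
      crossR EL leL ∪ liftL EL (φ m) := by
    rintro m (⟨hone, -⟩ | ⟨v', w', -, hv, -⟩)
    · exact Bool.noConfusion hone.1
    · exact Sum.inr_ne_inl hv
  have hp2cross : ((Sum.inl u : XKL EL), (Sum.inr (blkMk EL u, true, false) : XKL EL)) ∈
      crossR EL leL := by
    refine ⟨⟨rfl, rfl⟩, ?_⟩
    rintro ⟨v', w', -, -, hw⟩
    exact Sum.inr_ne_inl hw
  constructor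
  · intro a b h
    match a, b, h with
    | Sum.inl true, Sum.inl true, h => rfl
    | Sum.inl false, Sum.inl false, h => rfl
    | Sum.inl true, Sum.inl false, h =>
      have h' : EKL EL = (∅ : Set (XKL EL × XKL EL)) := h
      exact absurd (h' ▸ hp1E) (Set.notMem_empty _)
    | Sum.inl false, Sum.inl true, h =>
      have h' : EKL EL = (∅ : Set (XKL EL × XKL EL)) := h.symm
      exact absurd (h' ▸ hp1E) (Set.notMem_empty _)
    | Sum.inl true, Sum.inr m, h =>
      have h' : EKL EL = crossR EL leL ∪ liftL EL (φ m) := h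
      exact absurd (h' ▸ hp1E) (hp1not m)
    | Sum.inr m, Sum.inl true, h =>
      have h' : EKL EL = crossR EL leL ∪ liftL EL (φ m) := h.symm
      exact absurd (h' ▸ hp1E) (hp1not m)
    | Sum.inl false, Sum.inr m, h =>
      have h' : crossR EL leL ∪ liftL EL (φ m) = (∅ : Set (XKL EL × XKL EL)) := h.symm
      exact absurd (h' ▸ Set.mem_union_left _ hp2cross) (Set.notMem_empty _)
    | Sum.inr m, Sum.inl false, h =>
      have h' : crossR EL leL ∪ liftL EL (φ m) = (∅ : Set (XKL EL × XKL EL)) := h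
      exact absurd (h' ▸ Set.mem_union_left _ hp2cross) (Set.notMem_empty _)
    | Sum.inr m, Sum.inr m', h =>
      have hφ : φ m = φ m' := by
        ext ⟨v, w⟩
        have hset : crossR EL leL ∪ liftL EL (φ m) = crossR EL leL ∪ liftL EL (φ m') := h
        constructor
        · intro hvw
          have h1 : ((Sum.inl v : XKL EL), (Sum.inl w : XKL EL)) ∈
              crossR EL leL ∪ liftL EL (φ m') :=
            hset ▸ Set.mem_union_right _ ((mem_liftL (φ m) v w).2 hvw)
          rcases h1 with h1 | h1
          · exact absurd h1 (crossR_no_inl v w)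
          · exact (mem_liftL (φ m') v w).1 h1
        · intro hvw
          have h1 : ((Sum.inl v : XKL EL), (Sum.inl w : XKL EL)) ∈
              crossR EL leL ∪ liftL EL (φ m) :=
            hset ▸ Set.mem_union_right _ ((mem_liftL (φ m') v w).2 hvw)
          rcases h1 with h1 | h1
          · exact absurd h1 (crossR_no_inl v w)
          · exact (mem_liftL (φ m) v w).1 h1
      exact congrArg Sum.inr (hemb.inj (Set.mem_univ m) (Set.mem_univ m') hφ)
  · show crossR EL leL ∪ liftL EL (φ QRA.one) = oneKL EL leL
    rw [hemb.map_one]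
    ext ⟨p1, p2⟩
    constructor
    · rintro (⟨hone, -⟩ | ⟨v, w, hvw, hv, hw⟩)
      · exact hone
      · cases hv; cases hw; exact hvw
    · intro hp
      by_cases hl : (p1, p2) ∈ liftL EL (oneRel leL)
      · exact Set.mem_union_right _ hl
      · exact Set.mem_union_left _ ⟨hp, hl⟩
end

section
/- Every finite Sugihara chain S_n (n ≥ 2), viewed as a distributive quasi relation algebra, is finitely representable: there exist a finite poset X = (X,≤), an equivalence relation E on X with ≤ ⊆ E, an order automorphism α of X and a self-inverse dual order automorphism β of X with α, β ⊆ E and β = α;β;α, such that S_n embeds as a qRA into Dq(E). -/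
universe u v

namespace Sug

variable (n : ℕ)

/-- Half of `n`, as an integer. -/
def K : ℤ := (n / 2 : ℕ)

/-- Valid points: layers `1,…,2K-1`, two points per layer except that for
even `n` the middle layer `K` has the single point with bit `false`. -/
def Valid (p : ℤ × Bool) : Prop :=
  1 ≤ p.1 ∧ p.1 ≤ 2 * K n - 1 ∧ (n % 2 = 0 → p.1 = K n → p.2 = false)

/-- The carrier poset. -/
def X : Type := {p : ℤ × Bool // Valid n p}

/-- The layered order. -/
def le (u v : X n) : Prop := u.1.1 < v.1.1 ∨ u = v

/-- The order automorphism: flip the bit (fixing the even middle point). -/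
def a (u : X n) : X n :=
  ⟨(u.1.1, if n % 2 = 0 ∧ u.1.1 = K n then u.1.2 else !u.1.2), by
    obtain ⟨⟨i, s⟩, h1, h2, h3⟩ := u
    refine ⟨h1, h2, fun he hi => ?_⟩
    simp only [if_pos (⟨he, hi⟩ : n % 2 = 0 ∧ i = K n)]
    exact h3 he hi⟩

/-- The dual order automorphism: mirror the layers. -/
def b (u : X n) : X n :=
  ⟨(2 * K n - u.1.1, u.1.2), by
    obtain ⟨h1, h2, h3⟩ := u.2
    refine ⟨show (1:ℤ) ≤ 2 * K n - u.1.1 by omega,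
      show 2 * K n - u.1.1 ≤ 2 * K n - 1 by omega, fun he hi => h3 he ?_⟩
    have hi' : 2 * K n - u.1.1 = K n := hi
    omega⟩

/-- Windows of layers around the middle layer. -/
def win (u : X n) (m : ℤ) : Prop := K n - m < u.1.1 ∧ u.1.1 < K n + m

/-- Fixed points of `a`. -/
def fix (u : X n) : Prop := n % 2 = 0 ∧ u.1.1 = K n

/-- The "strict" part of the order (excluding even-middle diagonal). -/
def Dst (u v : X n) : Prop := le n u v ∧ (u = v → ¬ fix n u)

/-- Positive relations. -/
def P (m : ℤ) : Set (X n × X n) :=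
  {p | le n p.1 p.2 ∨ (win n p.1 m ∧ win n p.2 m)}

/-- Negative relations. -/
def N (m : ℤ) : Set (X n × X n) :=
  {p | Dst n p.1 p.2 ∧ ¬(win n p.1 m ∧ win n p.2 m)}

/-- The embedding map. -/
def f (m : ℤ) : Set (X n × X n) := if 0 ≤ m then P n m else N n (-m)

variable {n}

lemma eq_iff {u v : X n} : u = v ↔ u.1.1 = v.1.1 ∧ u.1.2 = v.1.2 := by
  exact (Subtype.ext_iff (a1 := (u : {p : ℤ × Bool // Valid n p})) (a2 := v)).trans Prod.ext_iff

@[simp] lemma a_fst (u : X n) : (a n u).1.1 = u.1.1 := rfl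

lemma a_snd (u : X n) :
    (a n u).1.2 = if n % 2 = 0 ∧ u.1.1 = K n then u.1.2 else !u.1.2 := rfl

@[simp] lemma b_fst (u : X n) : (b n u).1.1 = 2 * K n - u.1.1 := rfl

@[simp] lemma b_snd (u : X n) : (b n u).1.2 = u.1.2 := rfl

lemma le_refl' (u : X n) : le n u u := Or.inr rfl

lemma le_of_lt' {u v : X n} (h : u.1.1 < v.1.1) : le n u v := Or.inl h

lemma le_layer {u v : X n} (h : le n u v) : u.1.1 ≤ v.1.1 := by
  rcases h with h | rfl
  · omega
  · omega

lemma le_trans' {u v w : X n} (h : le n u v) (h' : le n v w) : le n u w := by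
  rcases h with h | rfl
  · rcases h' with h' | rfl
    · exact Or.inl (h.trans h')
    · exact Or.inl h
  · exact h'

lemma le_antisymm' {u v : X n} (h : le n u v) (h' : le n v u) : u = v := by
  rcases h with h | rfl
  · rcases h' with h' | rfl
    · omega
    · rfl
  · rfl

lemma a_invol (u : X n) : a n (a n u) = u := by
  rw [eq_iff]
  refine ⟨rfl, ?_⟩
  rw [a_snd, a_snd, a_fst]
  by_cases h : n % 2 = 0 ∧ u.1.1 = K n
  · simp [h]
  · simp [h]

lemma b_invol (u : X n) : b n (b n u) = u := by
  rw [eq_iff]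
  exact ⟨by simp, rfl⟩

lemma a_inj {u v : X n} (h : a n u = a n v) : u = v := by
  have := congrArg (a n) h
  rwa [a_invol, a_invol] at this

lemma b_inj {u v : X n} (h : b n u = b n v) : u = v := by
  have := congrArg (b n) h
  rwa [b_invol, b_invol] at this

lemma fix_eq {u : X n} (h : fix n u) : a n u = u := by
  rw [eq_iff, a_snd]
  exact ⟨rfl, by simp [h.1, h.2]⟩

lemma fix_of_aeq {u : X n} (h : a n u = u) : fix n u := by
  by_contra hf
  have hb := congrArg (fun x : X n => x.1.2) h
  simp only [a_snd] at hb
  rw [if_neg (show ¬(n % 2 = 0 ∧ u.1.1 = K n) from hf)] at hb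
  cases hu : u.1.2 <;> rw [hu] at hb <;> simp at hb

lemma fix_bit {u : X n} (h : fix n u) : u.1.2 = false := u.2.2.2 h.1 h.2

/-- Same-layer dichotomy: two points in the same layer are equal or `a`-related. -/
lemma same_layer {u v : X n} (h : u.1.1 = v.1.1) : u = v ∨ u = a n v := by
  by_cases hf : n % 2 = 0 ∧ v.1.1 = K n
  · left
    rw [eq_iff]
    refine ⟨h, ?_⟩
    rw [v.2.2.2 hf.1 hf.2, u.2.2.2 hf.1 (by rw [h]; exact hf.2)]
  · rcases Bool.eq_or_eq_not u.1.2 v.1.2 with hb | hb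
    · exact Or.inl (eq_iff.2 ⟨h, hb⟩)
    · right
      rw [eq_iff, a_snd, if_neg hf]
      exact ⟨h, hb⟩

lemma a_ne {u : X n} (h : ¬ fix n u) : a n u ≠ u := fun he => h (fix_of_aeq he)

end Sug
namespace Sug

variable {n : ℕ}

lemma layer_eq {u v : X n} (h : u = v) : u.1.1 = v.1.1 := by rw [h]

lemma win_mono {u : X n} {m m' : ℤ} (h : win n u m) (hm : m ≤ m') : win n u m' := by
  obtain ⟨h1, h2⟩ := h; exact ⟨by omega, by omega⟩

lemma win_a {u : X n} {m : ℤ} : win n (a n u) m ↔ win n u m := Iff.rfl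

lemma win_b {u : X n} {m : ℤ} : win n (b n u) m ↔ win n u m := by
  unfold win
  rw [b_fst]
  omega

lemma le_bb {x y : X n} : le n (b n x) (b n y) ↔ le n y x := by
  constructor
  · rintro (h | h)
    · rw [b_fst, b_fst] at h; exact Or.inl (by omega)
    · exact Or.inr (b_inj h).symm
  · rintro (h | h)
    · exact Or.inl (by rw [b_fst, b_fst]; omega)
    · exact Or.inr (congrArg (b n) h.symm)

lemma fix_b {x : X n} : fix n (b n x) ↔ fix n x := by
  unfold fix
  rw [b_fst]
  omega

lemma Dst_bb {x y : X n} : Dst n (b n x) (b n y) ↔ Dst n y x := by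
  constructor
  · rintro ⟨h1, h2⟩
    refine ⟨le_bb.1 h1, fun he hf => ?_⟩
    exact h2 (congrArg (b n) he.symm) (fix_b.2 (he ▸ hf))
  · rintro ⟨h1, h2⟩
    refine ⟨le_bb.2 h1, fun he hf => ?_⟩
    have he' : x = y := b_inj he
    refine h2 he'.symm ?_
    rw [← he']
    exact fix_b.1 hf

lemma Dst_le {u v : X n} (h : Dst n u v) : le n u v := h.1

lemma Dst_of_lt {u v : X n} (h : u.1.1 < v.1.1) : Dst n u v :=
  ⟨Or.inl h, fun he => absurd (layer_eq he) (by omega)⟩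

lemma Dst_refl {u : X n} (h : ¬ fix n u) : Dst n u u := ⟨le_refl' u, fun _ => h⟩

lemma Dst_odd {u v : X n} (hodd : n % 2 ≠ 0) : Dst n u v ↔ le n u v :=
  ⟨Dst_le, fun h => ⟨h, fun _ hf => hodd hf.1⟩⟩

/-- Core lemma LA. -/
lemma not_le_va {u v : X n} : ¬ le n v (a n u) ↔ Dst n u v := by
  constructor
  · intro hn
    have h1 : ¬ v.1.1 < u.1.1 := fun h => hn (Or.inl (by rw [a_fst]; exact h))
    have h2 : v ≠ a n u := fun h => hn (Or.inr h)
    rcases lt_trichotomy u.1.1 v.1.1 with h | h | h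
    · exact Dst_of_lt h
    · rcases same_layer h.symm with he | he
      · rw [← he]
        refine Dst_refl fun hf => ?_
        have hfe : a n u = u := by rw [← he]; exact fix_eq hf
        exact h2 (he.trans hfe.symm)
      · exact absurd he h2
    · exact absurd h h1
  · rintro ⟨h1, h2⟩ (h | h)
    · have h3 := le_layer h1
      rw [a_fst] at h
      omega
    · have hl : v.1.1 = u.1.1 := by rw [layer_eq h, a_fst]
      have he : u = v := by
        rcases h1 with h1 | h1
        · omega
        · exact h1
      refine h2 he (fix_of_aeq ?_)
      rw [← he] at h
      exact h.symm

/-- Core lemma LB. -/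
lemma not_le_av {u v : X n} : ¬ le n (a n v) u ↔ Dst n u v := by
  constructor
  · intro hn
    have h1 : ¬ v.1.1 < u.1.1 := fun h => hn (Or.inl (by rw [a_fst]; exact h))
    have h2 : a n v ≠ u := fun h => hn (Or.inr h)
    rcases lt_trichotomy u.1.1 v.1.1 with h | h | h
    · exact Dst_of_lt h
    · rcases same_layer h with he | he
      · rw [he]
        refine Dst_refl fun hf => ?_
        rw [he] at h2
        exact h2 (fix_eq hf)
      · exact absurd he.symm h2
    · exact absurd h h1
  · rintro ⟨h1, h2⟩ (h | h)
    · have h3 := le_layer h1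
      rw [a_fst] at h
      omega
    · have hl : v.1.1 = u.1.1 := by rw [← layer_eq h, a_fst]
      have he : u = v := by
        rcases h1 with h1 | h1
        · omega
        · exact h1
      refine h2 he (fix_of_aeq ?_)
      rw [he]
      exact h.trans he

/-- Core lemma LC. -/
lemma not_Dst_av {u v : X n} : ¬ Dst n (a n v) u ↔ le n u v := by
  constructor
  · intro hn
    by_cases hA : le n (a n v) u
    · have hB : ¬ (a n v = u → ¬ fix n (a n v)) := fun hB => hn ⟨hA, hB⟩
      push_neg at hB
      obtain ⟨he, hf⟩ := hB
      have hv : a n v = v := by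
        have h' := fix_eq hf
        rw [a_invol] at h'
        exact h'.symm
      rw [← he, hv]
      exact le_refl' v
    · exact Dst_le (not_le_av.1 hA)
  · intro hle hD
    obtain ⟨h1, h2⟩ := hD
    rcases h1 with h1 | h1
    · have h3 := le_layer hle
      rw [a_fst] at h1
      omega
    · have h2' := h2 h1
      have hl : u.1.1 = v.1.1 := by rw [← layer_eq h1, a_fst]
      have huv : u = v := by
        rcases hle with h | h
        · omega
        · exact h
      have hav : a n v = v := by rw [h1, huv]
      refine h2' ?_
      rw [hav]
      exact fix_of_aeq hav

/-- Core lemma LD. -/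
lemma not_Dst_va {u v : X n} : ¬ Dst n v (a n u) ↔ le n u v := by
  constructor
  · intro hn
    by_cases hA : le n v (a n u)
    · have hB : ¬ (v = a n u → ¬ fix n v) := fun hB => hn ⟨hA, hB⟩
      push_neg at hB
      obtain ⟨he, hf⟩ := hB
      have hv : a n v = v := fix_eq hf
      have hu : u = v := by
        have h' := congrArg (a n) he
        rw [a_invol, hv] at h'
        exact h'.symm
      rw [hu]
      exact le_refl' v
    · exact Dst_le (not_le_va.1 hA)
  · intro hle hD
    obtain ⟨h1, h2⟩ := hD
    rcases h1 with h1 | h1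
    · have h3 := le_layer hle
      rw [a_fst] at h1
      omega
    · have h2' := h2 h1
      have hl : u.1.1 = v.1.1 := by rw [layer_eq h1, a_fst]
      have huv : u = v := by
        rcases hle with h | h
        · omega
        · exact h
      have hau : a n u = u := by rw [← huv] at h1; exact h1.symm
      refine h2' ?_
      rw [huv] at hau
      exact fix_of_aeq hau

end Sug
namespace Sug

variable {n : ℕ}

lemma mem_sneg {R : Set (X n × X n)} {u v : X n} :
    (u, v) ∈ snegRel Set.univ (a n) R ↔ (a n v, u) ∉ R := by
  constructor
  · rintro ⟨z, hz, hg⟩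
    have hg' : v = a n z := hg
    have hz' : z = a n v := by rw [hg', a_invol]
    rw [← hz']
    exact fun h => hz.2 h
  · intro h
    exact ⟨a n v, ⟨trivial, h⟩, (a_invol v).symm⟩

lemma mem_rneg {R : Set (X n × X n)} {u v : X n} :
    (u, v) ∈ rnegRel Set.univ (a n) R ↔ (v, a n u) ∉ R := by
  constructor
  · rintro ⟨z, hz, hg⟩
    have hz' : z = a n u := hz
    rw [← hz']
    exact fun h => hg.2 h
  · intro h
    exact ⟨a n u, rfl, trivial, h⟩

lemma mem_qneg {R : Set (X n × X n)} {u v : X n} :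
    (u, v) ∈ qnegRel Set.univ (a n) (b n) R ↔ (b n (a n u), b n v) ∉ R := by
  constructor
  · rintro ⟨z1, hz1, z2, hz2, z3, hz3, hg⟩
    have hz1' : z1 = a n u := hz1
    have hz2' : z2 = b n z1 := hz2
    have hg' : v = b n z3 := hg
    have hz3' : z3 = b n v := by rw [hg', b_invol]
    have hpair : (b n (a n u), b n v) = (z2, z3) := by rw [hz2', hz1', hz3']
    rw [hpair]
    exact fun h => hz3.2 h
  · intro h
    exact ⟨a n u, rfl, b n (a n u), rfl, b n v, ⟨trivial, h⟩, (b_invol v).symm⟩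

lemma sneg_P {m : ℤ} : snegRel Set.univ (a n) (P n m) = N n m := by
  ext ⟨u, v⟩
  rw [mem_sneg]; simp only [N, P, Set.mem_setOf_eq]
  constructor
  · intro h
    exact ⟨not_le_av.1 fun hle => h (Or.inl hle),
      fun hw => h (Or.inr ⟨win_a.2 hw.2, hw.1⟩)⟩
  · rintro ⟨hD, hw⟩ (hle | ⟨w1, w2⟩)
    · exact not_le_av.2 hD hle
    · exact hw ⟨w2, win_a.1 w1⟩

lemma sneg_N {m : ℤ} : snegRel Set.univ (a n) (N n m) = P n m := by
  ext ⟨u, v⟩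
  rw [mem_sneg]; simp only [N, P, Set.mem_setOf_eq]
  constructor
  · intro h
    by_cases hW : win n u m ∧ win n v m
    · exact Or.inr hW
    · refine Or.inl (not_Dst_av.1 fun hD' => h ⟨hD', fun hw => hW ⟨hw.2, win_a.1 hw.1⟩⟩)
  · rintro (hle | ⟨w1, w2⟩) ⟨hD, hw⟩
    · exact not_Dst_av.2 hle hD
    · exact hw ⟨win_a.2 w2, w1⟩

lemma rneg_P {m : ℤ} : rnegRel Set.univ (a n) (P n m) = N n m := by
  ext ⟨u, v⟩
  rw [mem_rneg]; simp only [N, P, Set.mem_setOf_eq]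
  constructor
  · intro h
    exact ⟨not_le_va.1 fun hle => h (Or.inl hle),
      fun hw => h (Or.inr ⟨hw.2, win_a.2 hw.1⟩)⟩
  · rintro ⟨hD, hw⟩ (hle | ⟨w1, w2⟩)
    · exact not_le_va.2 hD hle
    · exact hw ⟨win_a.1 w2, w1⟩

lemma rneg_N {m : ℤ} : rnegRel Set.univ (a n) (N n m) = P n m := by
  ext ⟨u, v⟩
  rw [mem_rneg]; simp only [N, P, Set.mem_setOf_eq]
  constructor
  · intro h
    by_cases hW : win n u m ∧ win n v m
    · exact Or.inr hW
    · refine Or.inl (not_Dst_va.1 fun hD' => h ⟨hD', fun hw => hW ⟨win_a.1 hw.2, hw.1⟩⟩)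
  · rintro (hle | ⟨w1, w2⟩) ⟨hD, hw⟩
    · exact not_Dst_va.2 hle hD
    · exact hw ⟨w2, win_a.2 w1⟩

lemma qneg_P {m : ℤ} : qnegRel Set.univ (a n) (b n) (P n m) = N n m := by
  ext ⟨u, v⟩
  rw [mem_qneg]; simp only [N, P, Set.mem_setOf_eq]
  constructor
  · intro h
    refine ⟨not_le_va.1 fun hle => h (Or.inl (le_bb.2 hle)), fun hw => ?_⟩
    exact h (Or.inr ⟨win_b.2 (win_a.2 hw.1), win_b.2 hw.2⟩)
  · rintro ⟨hD, hw⟩ (hle | ⟨w1, w2⟩)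
    · exact not_le_va.2 hD (le_bb.1 hle)
    · exact hw ⟨win_a.1 (win_b.1 w1), win_b.1 w2⟩

lemma qneg_N {m : ℤ} : qnegRel Set.univ (a n) (b n) (N n m) = P n m := by
  ext ⟨u, v⟩
  rw [mem_qneg]; simp only [N, P, Set.mem_setOf_eq]
  constructor
  · intro h
    by_cases hW : win n u m ∧ win n v m
    · exact Or.inr hW
    · refine Or.inl (not_Dst_va.1 fun hD' => h ⟨Dst_bb.2 hD', fun hw => ?_⟩)
      exact hW ⟨win_a.1 (win_b.1 hw.1), win_b.1 hw.2⟩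
  · rintro (hle | ⟨w1, w2⟩) ⟨hD, hw⟩
    · exact not_Dst_va.2 hle (Dst_bb.1 hD)
    · exact hw ⟨win_b.2 (win_a.2 w1), win_b.2 w2⟩

lemma win_zero {u : X n} : ¬ win n u 0 := by unfold win; omega

lemma P_zero : P n 0 = oneRel (le n) := by
  ext ⟨u, v⟩
  simp only [P, oneRel, Set.mem_setOf_eq]
  exact ⟨fun h => h.resolve_right (fun hw => win_zero hw.1), Or.inl⟩

lemma N_zero (hodd : n % 2 ≠ 0) : N n 0 = oneRel (le n) := by
  ext ⟨u, v⟩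
  simp only [N, oneRel, Set.mem_setOf_eq]
  exact ⟨fun h => (Dst_odd hodd).1 h.1,
    fun h => ⟨(Dst_odd hodd).2 h, fun hw => win_zero hw.1⟩⟩

lemma win_one_even {u : X n} (he : n % 2 = 0) (hw : win n u 1) : fix n u :=
  ⟨he, by obtain ⟨h1, h2⟩ := hw; omega⟩

lemma fix_fix_eq {u v : X n} (hu : fix n u) (hv : fix n v) : u = v :=
  eq_iff.2 ⟨by rw [hu.2, hv.2], by rw [fix_bit hu, fix_bit hv]⟩

lemma P_one_even (he : n % 2 = 0) : P n 1 = oneRel (le n) := by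
  ext ⟨u, v⟩
  simp only [P, oneRel, Set.mem_setOf_eq]
  refine ⟨fun h => ?_, Or.inl⟩
  rcases h with h | ⟨w1, w2⟩
  · exact h
  · rw [fix_fix_eq (win_one_even he w1) (win_one_even he w2)]
    exact le_refl' v

lemma N_one_even (he : n % 2 = 0) : N n 1 = {p : X n × X n | Dst n p.1 p.2} := by
  ext ⟨u, v⟩
  simp only [N, Set.mem_setOf_eq]
  refine ⟨fun h => h.1, fun h => ⟨h, fun hw => ?_⟩⟩
  have heq := fix_fix_eq (win_one_even he hw.1) (win_one_even he hw.2)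
  exact h.2 heq (win_one_even he hw.1)

lemma zeroRel_eq : zeroRel (le n) Set.univ (a n) = {p : X n × X n | Dst n p.1 p.2} := by
  ext ⟨u, v⟩
  simp only [Set.mem_setOf_eq]
  constructor
  · rintro ⟨z, hz, hg⟩
    have hz' : z = a n u := hz
    rw [hz'] at hg
    exact not_le_va.1 fun h => hg.2 h
  · intro h
    exact ⟨a n u, rfl, trivial, not_le_va.2 h⟩

end Sug
namespace Sug

variable {n : ℕ}

/-- Element builder with bit `false` (always valid). -/
def mk (i : ℤ) (h1 : 1 ≤ i) (h2 : i ≤ 2 * K n - 1) : X n :=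
  ⟨(i, false), h1, h2, fun _ _ => rfl⟩

@[simp] lemma mk_fst {i : ℤ} {h1 : 1 ≤ i} {h2 : i ≤ 2 * K n - 1} :
    (mk (n := n) i h1 h2).1.1 = i := rfl

lemma win_mk {i m : ℤ} {h1 : 1 ≤ i} {h2 : i ≤ 2 * K n - 1} :
    win n (mk (n := n) i h1 h2) m ↔ K n - m < i ∧ i < K n + m := Iff.rfl

lemma mem_rcomp {R S : Set (X n × X n)} {u v : X n} :
    (u, v) ∈ rcomp R S ↔ ∃ z, (u, z) ∈ R ∧ (z, v) ∈ S := Iff.rfl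

lemma mem_P {m : ℤ} {u v : X n} :
    (u, v) ∈ P n m ↔ (le n u v ∨ (win n u m ∧ win n v m)) := Iff.rfl

lemma mem_N {m : ℤ} {u v : X n} :
    (u, v) ∈ N n m ↔ (Dst n u v ∧ ¬(win n u m ∧ win n v m)) := Iff.rfl

/-- Transpose-and-mirror anti-automorphism. -/
def T (R : Set (X n × X n)) : Set (X n × X n) := {p | (b n p.2, b n p.1) ∈ R}

lemma T_rcomp {R S : Set (X n × X n)} : T (rcomp R S) = rcomp (T S) (T R) := by
  ext ⟨u, v⟩
  constructor
  · rintro ⟨z, h1, h2⟩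
    refine ⟨b n z, ?_, ?_⟩
    · show (b n (b n z), b n u) ∈ S
      rw [b_invol]
      exact h2
    · show (b n v, b n (b n z)) ∈ R
      rw [b_invol]
      exact h1
  · rintro ⟨w, h1, h2⟩
    exact ⟨b n w, h2, h1⟩

lemma T_P {m : ℤ} : T (P n m) = P n m := by
  ext ⟨u, v⟩
  show (le n (b n v) (b n u) ∨ _) ↔ _
  constructor
  · rintro (h | ⟨w1, w2⟩)
    · exact Or.inl (le_bb.1 h)
    · exact Or.inr ⟨win_b.1 w2, win_b.1 w1⟩
  · rintro (h | ⟨w1, w2⟩)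
    · exact Or.inl (le_bb.2 h)
    · exact Or.inr ⟨win_b.2 w2, win_b.2 w1⟩

lemma T_N {m : ℤ} : T (N n m) = N n m := by
  ext ⟨u, v⟩
  show (Dst n (b n v) (b n u) ∧ _) ↔ _
  constructor
  · rintro ⟨h, hw⟩
    exact ⟨Dst_bb.1 h, fun ⟨w1, w2⟩ => hw ⟨win_b.2 w2, win_b.2 w1⟩⟩
  · rintro ⟨h, hw⟩
    exact ⟨Dst_bb.2 h, fun ⟨w1, w2⟩ => hw ⟨win_b.1 w2, win_b.1 w1⟩⟩

lemma T_T {R : Set (X n × X n)} : T (T R) = R := by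
  ext ⟨u, v⟩
  show (b n (b n u), b n (b n v)) ∈ R ↔ _
  rw [b_invol, b_invol]

lemma comp_PP_le {m m' : ℤ} (h : m ≤ m') :
    rcomp (P n m) (P n m') = P n m' := by
  ext ⟨u, v⟩
  simp only [mem_rcomp, mem_P]
  constructor
  · rintro ⟨z, h1, h2⟩
    rcases h1 with h1 | ⟨wu, wz⟩ <;> rcases h2 with h2 | ⟨wz', wv⟩
    · exact Or.inl (le_trans' h1 h2)
    · by_cases hwu : win n u m'
      · exact Or.inr ⟨hwu, wv⟩
      · refine Or.inl (le_of_lt' ?_)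
        have hl := le_layer h1
        obtain ⟨e1, e2⟩ := wz'
        obtain ⟨e3, e4⟩ := wv
        simp only [win, not_and, not_lt] at hwu
        omega
    · by_cases hwv : win n v m'
      · exact Or.inr ⟨win_mono wu h, hwv⟩
      · refine Or.inl (le_of_lt' ?_)
        have hl := le_layer h2
        obtain ⟨e1, e2⟩ := wu
        obtain ⟨e3, e4⟩ := wz
        simp only [win, not_and, not_lt] at hwv
        omega
    · exact Or.inr ⟨win_mono wu h, wv⟩
  · rintro (h1 | ⟨w1, w2⟩)
    · exact ⟨u, Or.inl (le_refl' u), Or.inl h1⟩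
    · exact ⟨u, Or.inl (le_refl' u), Or.inr ⟨w1, w2⟩⟩

lemma comp_PP_ge {m m' : ℤ} (h : m' ≤ m) :
    rcomp (P n m) (P n m') = P n m := by
  have h1 : rcomp (P n m') (P n m) = P n m := comp_PP_le h
  have h2 : T (rcomp (P n m') (P n m)) = rcomp (P n m) (P n m') := by
    rw [T_rcomp, T_P, T_P]
  rw [← h2, h1, T_P]

lemma fix_notwin {m : ℤ} {v : X n} (hm : 0 ≤ m) (h0 : m = 0 → n % 2 ≠ 0)
    (hwv : ¬ win n v m) : ¬ fix n v := by
  intro hf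
  by_cases h' : m = 0
  · exact h0 h' hf.1
  · have hj := hf.2
    simp only [win, not_and, not_lt] at hwv
    omega

lemma comp_NN_le {m m' : ℤ} (hm : 0 ≤ m) (h : m ≤ m') (h0 : m' = 0 → n % 2 ≠ 0) :
    rcomp (N n m) (N n m') = N n m' := by
  ext ⟨u, v⟩
  simp only [mem_rcomp, mem_N]
  constructor
  · rintro ⟨z, ⟨hd1, hw1⟩, ⟨hd2, hw2⟩⟩
    refine ⟨⟨le_trans' hd1.1 hd2.1, fun he => ?_⟩, fun ⟨wu, wv⟩ => ?_⟩
    · have h4 : le n z u := by rw [← he] at hd2; exact hd2.1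
      have hz : u = z := le_antisymm' hd1.1 h4
      exact hd1.2 hz
    · have l1 := le_layer hd1.1
      have l2 := le_layer hd2.1
      obtain ⟨e1, e2⟩ := wu
      obtain ⟨e3, e4⟩ := wv
      exact hw2 ⟨⟨by omega, by omega⟩, ⟨e3, e4⟩⟩
  · rintro ⟨hd, hw⟩
    by_cases hwu : win n u m'
    · have hwv : ¬ win n v m' := fun h' => hw ⟨hwu, h'⟩
      refine ⟨v, ⟨hd, fun ⟨_, wv⟩ => hwv (win_mono wv h)⟩,
        ⟨Dst_refl (fix_notwin (by omega) h0 hwv), fun ⟨wv, _⟩ => hwv wv⟩⟩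
    · refine ⟨u, ⟨Dst_refl (fix_notwin (by omega) h0 hwu), fun ⟨wu', _⟩ => hwu (win_mono wu' h)⟩,
        ⟨hd, fun ⟨wu', _⟩ => hwu wu'⟩⟩

lemma comp_NN_ge {m m' : ℤ} (hm' : 0 ≤ m') (h : m' ≤ m) (h0 : m = 0 → n % 2 ≠ 0) :
    rcomp (N n m) (N n m') = N n m := by
  have h1 : rcomp (N n m') (N n m) = N n m := comp_NN_le hm' h h0
  have h2 : T (rcomp (N n m') (N n m)) = rcomp (N n m) (N n m') := by
    rw [T_rcomp, T_N, T_N]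
  rw [← h2, h1, T_N]

lemma comp_PN_ge {m m' : ℤ} (hm : 0 ≤ m) (h : m ≤ m') (h0 : m' = 0 → n % 2 ≠ 0) :
    rcomp (P n m) (N n m') = N n m' := by
  ext ⟨u, v⟩
  simp only [mem_rcomp, mem_P, mem_N]
  constructor
  · rintro ⟨z, h1, ⟨hd, hw⟩⟩
    rcases h1 with h1 | ⟨wu, wz⟩
    · refine ⟨⟨le_trans' h1 hd.1, fun he => ?_⟩, fun ⟨wu, wv⟩ => ?_⟩
      · have h4 : le n z u := by rw [he]; exact hd.1
        have hz : u = z := le_antisymm' h1 h4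
        have h5 : ¬ fix n z := hd.2 (by rw [← hz]; exact he)
        rw [hz]
        exact h5
      · have l1 := le_layer h1
        have l2 := le_layer hd.1
        obtain ⟨e1, e2⟩ := wu
        obtain ⟨e3, e4⟩ := wv
        exact hw ⟨⟨by omega, by omega⟩, ⟨e3, e4⟩⟩
    · have wz' : win n z m' := win_mono wz h
      have hwv : ¬ win n v m' := fun h' => hw ⟨wz', h'⟩
      refine ⟨Dst_of_lt ?_, fun ⟨_, wv⟩ => hwv wv⟩
      have l2 := le_layer hd.1
      obtain ⟨e1, e2⟩ := wu
      obtain ⟨e3, e4⟩ := wz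
      simp only [win, not_and, not_lt] at hwv
      omega
  · intro hp
    exact ⟨u, Or.inl (le_refl' u), hp⟩

lemma comp_PN_lt {m m' : ℤ} (hm' : 0 ≤ m') (hlt : m' < m) (hmK : m ≤ K n)
    (h0 : m' = 0 → n % 2 ≠ 0) :
    rcomp (P n m) (N n m') = P n m := by
  ext ⟨u, v⟩
  simp only [mem_rcomp, mem_P, mem_N]
  constructor
  · rintro ⟨z, h1, ⟨hd, hw⟩⟩
    rcases h1 with h1 | ⟨wu, wz⟩
    · exact Or.inl (le_trans' h1 hd.1)
    · by_cases hwv : win n v m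
      · exact Or.inr ⟨wu, hwv⟩
      · refine Or.inl (le_of_lt' ?_)
        have l2 := le_layer hd.1
        obtain ⟨e1, e2⟩ := wu
        obtain ⟨e3, e4⟩ := wz
        simp only [win, not_and, not_lt] at hwv
        omega
  · intro hp
    by_cases hwv : win n v m'
    · have hm'1 : 1 ≤ m' := by
        rcases eq_or_lt_of_le hm' with h' | h'
        · exact absurd hwv (by rw [← h']; exact win_zero)
        · omega
      have hb1 : (1 : ℤ) ≤ K n - m' := by omega
      have hb2 : K n - m' ≤ 2 * K n - 1 := by omega
      refine ⟨mk (K n - m') hb1 hb2, ?_, ?_⟩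
      · by_cases hwu : win n u m
        · exact Or.inr ⟨hwu, win_mk.2 ⟨by omega, by omega⟩⟩
        · refine Or.inl (le_of_lt' ?_)
          rw [mk_fst]
          rcases hp with hle | ⟨w1, w2⟩
          · rcases hle with hlt' | he
            · obtain ⟨e1, e2⟩ := hwv
              simp only [win, not_and, not_lt] at hwu
              omega
            · refine absurd (win_mono ?_ (le_of_lt hlt)) hwu
              rw [he]
              exact hwv
          · exact absurd w1 hwu
      · refine ⟨Dst_of_lt ?_, fun ⟨wz, _⟩ => ?_⟩
        · rw [mk_fst]
          exact hwv.1
        · rw [win_mk] at wz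
          omega
    · exact ⟨v, hp, ⟨Dst_refl (fix_notwin hm' h0 hwv), fun ⟨wv, _⟩ => hwv wv⟩⟩

lemma comp_NP_ge {m m' : ℤ} (hm : 0 ≤ m) (h : m ≤ m') (h0 : m' = 0 → n % 2 ≠ 0) :
    rcomp (N n m') (P n m) = N n m' := by
  have h1 := comp_PN_ge (n := n) hm h h0
  have h2 : T (rcomp (P n m) (N n m')) = rcomp (N n m') (P n m) := by
    rw [T_rcomp, T_P, T_N]
  rw [← h2, h1, T_N]

lemma comp_NP_lt {m m' : ℤ} (hm' : 0 ≤ m') (hlt : m' < m) (hmK : m ≤ K n)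
    (h0 : m' = 0 → n % 2 ≠ 0) :
    rcomp (N n m') (P n m) = P n m := by
  have h1 := comp_PN_lt (n := n) hm' hlt hmK h0
  have h2 : T (rcomp (P n m) (N n m')) = rcomp (N n m') (P n m) := by
    rw [T_rcomp, T_P, T_N]
  rw [← h2, h1, T_P]

end Sug
namespace Sug

variable {n : ℕ}

lemma f_eq_P {m : ℤ} (hm : 0 ≤ m) : f n m = P n m := if_pos hm

lemma f_eq_N {m : ℤ} (hm : m < 0) : f n m = N n (-m) := if_neg (by omega)

lemma f_eq_N' {m : ℤ} (hm : m ≤ 0) (h0 : m = 0 → n % 2 ≠ 0) : f n m = N n (-m) := by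
  rcases lt_or_eq_of_le hm with h | h
  · exact f_eq_N h
  · rw [h, neg_zero, f_eq_P le_rfl, P_zero, N_zero (h0 h)]

lemma K_facts : 2 * K n ≤ (n : ℤ) ∧ (n : ℤ) ≤ 2 * K n + 1 ∧
    (n % 2 = 0 → (n : ℤ) = 2 * K n) := by
  unfold K
  omega

lemma bound_of_mem {m : ℤ} (hm : m ∈ sugSet n) :
    -(K n) ≤ m ∧ m ≤ K n ∧ (m = 0 → n % 2 ≠ 0) := by
  obtain ⟨h1, h2⟩ := hm
  have h3 := le_abs_self m
  have h4 : -m ≤ |m| := by rw [← abs_neg]; exact le_abs_self (-m)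
  have h5 := K_facts (n := n)
  refine ⟨by omega, by omega, fun he h0 => h2 (Nat.even_iff.2 h0) he⟩

lemma oneIdx_even (h : n % 2 = 0) : sugOneIdx n = 1 := by
  simp [sugOneIdx, Nat.even_iff, h]

lemma oneIdx_odd (h : n % 2 ≠ 0) : sugOneIdx n = 0 := by
  simp [sugOneIdx, Nat.even_iff, h]

lemma f_one : f n (sugOneIdx n) = oneRel (le n) := by
  by_cases h : n % 2 = 0
  · rw [oneIdx_even h, f_eq_P zero_le_one, P_one_even h]
  · rw [oneIdx_odd h, f_eq_P le_rfl, P_zero]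

lemma f_zero : f n (-(sugOneIdx n)) = zeroRel (le n) Set.univ (a n) := by
  by_cases h : n % 2 = 0
  · rw [oneIdx_even h, f_eq_N (by omega), neg_neg, N_one_even h, zeroRel_eq]
  · rw [oneIdx_odd h, neg_zero, f_eq_P le_rfl, P_zero, zeroRel_eq]
    ext ⟨u, v⟩
    exact ⟨fun hp => (Dst_odd h).2 hp, fun hp => (Dst_odd h).1 hp⟩

lemma P_mono {m m' : ℤ} (h : m ≤ m') : P n m ⊆ P n m' := by
  rintro ⟨u, v⟩ hp
  rw [mem_P] at hp ⊢
  rcases hp with hp | ⟨w1, w2⟩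
  · exact Or.inl hp
  · exact Or.inr ⟨win_mono w1 h, win_mono w2 h⟩

lemma N_anti {m m' : ℤ} (h : m' ≤ m) : N n m ⊆ N n m' := by
  rintro ⟨u, v⟩ hp
  rw [mem_N] at hp ⊢
  exact ⟨hp.1, fun ⟨w1, w2⟩ => hp.2 ⟨win_mono w1 h, win_mono w2 h⟩⟩

lemma N_sub_P {m m' : ℤ} : N n m ⊆ P n m' := by
  rintro ⟨u, v⟩ hp
  rw [mem_N] at hp
  exact Or.inl hp.1.1

lemma f_mono {m m' : ℤ} (hm : m ∈ sugSet n) (hm' : m' ∈ sugSet n) (h : m ≤ m') :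
    f n m ⊆ f n m' := by
  obtain ⟨b1, b2, b0⟩ := bound_of_mem hm
  obtain ⟨b1', b2', b0'⟩ := bound_of_mem hm'
  rcases le_or_gt 0 m with h1 | h1
  · rw [f_eq_P h1, f_eq_P (by omega)]
    exact P_mono h
  · rcases le_or_gt 0 m' with h2 | h2
    · rw [f_eq_N h1, f_eq_P h2]
      exact N_sub_P
    · rw [f_eq_N h1, f_eq_N h2]
      exact N_anti (by omega)

lemma upset_P {m : ℤ} : P n m ∈ upSets (le n) Set.univ := by
  refine ⟨fun _ _ => trivial, ?_⟩
  rintro ⟨p1, p2⟩ hp ⟨q1, q2⟩ _ h1 h2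
  rw [mem_P] at hp ⊢
  simp only at h1 h2
  rcases hp with hp | ⟨w1, w2⟩
  · exact Or.inl (le_trans' (le_trans' h1 hp) h2)
  · by_cases hq1 : win n q1 m
    · by_cases hq2 : win n q2 m
      · exact Or.inr ⟨hq1, hq2⟩
      · refine Or.inl (le_of_lt' ?_)
        have l1 := le_layer h1
        have l2 := le_layer h2
        obtain ⟨e1, e2⟩ := w1
        obtain ⟨e3, e4⟩ := w2
        simp only [win, not_and, not_lt] at hq2
        omega
    · refine Or.inl (le_of_lt' ?_)
      have l1 := le_layer h1
      have l2 := le_layer h2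
      obtain ⟨e1, e2⟩ := w1
      obtain ⟨e3, e4⟩ := w2
      simp only [win, not_and, not_lt] at hq1
      omega

lemma upset_N {m : ℤ} : N n m ∈ upSets (le n) Set.univ := by
  refine ⟨fun _ _ => trivial, ?_⟩
  rintro ⟨p1, p2⟩ hp ⟨q1, q2⟩ _ h1 h2
  rw [mem_N] at hp ⊢
  simp only at h1 h2
  obtain ⟨⟨hle, hfx⟩, hw⟩ := hp
  constructor
  · refine ⟨le_trans' h1 (le_trans' hle h2), fun he => ?_⟩
    have e1 : le n p2 q1 := by rw [← he] at h2; exact h2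
    have e2 : q1 = p1 := le_antisymm' h1 (le_trans' hle e1)
    have e3 : p1 = p2 := le_antisymm' hle (le_trans' e1 h1)
    rw [e2]
    exact hfx e3
  · intro ⟨w1, w2⟩
    have l1 := le_layer h1
    have l2 := le_layer h2
    have l3 := le_layer hle
    obtain ⟨e1, e2⟩ := w1
    obtain ⟨e3, e4⟩ := w2
    exact hw ⟨⟨by omega, by omega⟩, ⟨by omega, by omega⟩⟩

lemma sugMul_comm {m m' : ℤ} : sugMulIdx m m' = sugMulIdx m' m := by
  unfold sugMulIdx
  by_cases h1 : |m'| < |m|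
  · rw [if_pos h1, if_neg (by omega), if_pos h1]
  · by_cases h2 : |m| < |m'|
    · rw [if_neg h1, if_pos h2, if_pos h2]
    · rw [if_neg h1, if_neg h2, if_neg h2, if_neg h1, min_comm]

lemma sugMul_pp {m m' : ℤ} (hm0 : 0 ≤ m) (hm0' : 0 ≤ m') (h : m ≤ m') :
    sugMulIdx m m' = m' := by
  unfold sugMulIdx
  rw [abs_of_nonneg hm0, abs_of_nonneg hm0']
  rcases eq_or_lt_of_le h with rfl | h'
  · rw [if_neg (lt_irrefl _), if_neg (lt_irrefl _), min_self]
  · rw [if_neg (by omega), if_pos h']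

lemma sugMul_nn {m m' : ℤ} (hm0 : m ≤ 0) (hm0' : m' ≤ 0) (h : m ≤ m') :
    sugMulIdx m m' = m := by
  unfold sugMulIdx
  rw [abs_of_nonpos hm0, abs_of_nonpos hm0']
  rcases eq_or_lt_of_le h with rfl | h'
  · rw [if_neg (lt_irrefl _), if_neg (lt_irrefl _), min_self]
  · rw [if_pos (by omega)]

lemma sugMul_pn1 {m m' : ℤ} (hm0 : 0 ≤ m) (hm0' : m' < 0) (h : -m' < m) :
    sugMulIdx m m' = m := by
  unfold sugMulIdx
  rw [abs_of_nonneg hm0, abs_of_neg hm0']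
  rw [if_pos h]

lemma sugMul_pn2 {m m' : ℤ} (hm0 : 0 ≤ m) (hm0' : m' < 0) (h : m ≤ -m') :
    sugMulIdx m m' = m' := by
  unfold sugMulIdx
  rw [abs_of_nonneg hm0, abs_of_neg hm0']
  rcases eq_or_lt_of_le h with he | h'
  · rw [if_neg (by omega), if_neg (by omega)]
    exact min_eq_right (by omega)
  · rw [if_neg (by omega), if_pos h']

lemma sugMul_mem {m m' : ℤ} (hm : m ∈ sugSet n) (hm' : m' ∈ sugSet n) :
    sugMulIdx m m' ∈ sugSet n := by
  have h : sugMulIdx m m' = m ∨ sugMulIdx m m' = m' := by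
    unfold sugMulIdx
    split_ifs
    · exact Or.inl rfl
    · exact Or.inr rfl
    · rcases le_total m m' with h | h
      · exact Or.inl (min_eq_left h)
      · exact Or.inr (min_eq_right h)
  rcases h with h | h <;> rw [h] <;> assumption

lemma neg_mem {m : ℤ} (hm : m ∈ sugSet n) : -m ∈ sugSet n := by
  obtain ⟨h1, h2⟩ := hm
  exact ⟨by rwa [abs_neg], fun he h0 => h2 he (by omega)⟩

lemma comp_f {m m' : ℤ} (hm : m ∈ sugSet n) (hm' : m' ∈ sugSet n) :
    rcomp (f n m) (f n m') = f n (sugMulIdx m m') := by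
  obtain ⟨b1, b2, b0⟩ := bound_of_mem hm
  obtain ⟨b1', b2', b0'⟩ := bound_of_mem hm'
  rcases le_or_gt 0 m with hm0 | hm0 <;> rcases le_or_gt 0 m' with hm0' | hm0'
  · rcases le_total m m' with hle | hle
    · rw [f_eq_P hm0, f_eq_P hm0', comp_PP_le hle, sugMul_pp hm0 hm0' hle,
        f_eq_P hm0']
    · rw [f_eq_P hm0, f_eq_P hm0', comp_PP_ge hle, sugMul_comm,
        sugMul_pp hm0' hm0 hle, f_eq_P hm0]
  · rcases le_or_gt (-m') m with hc | hc
    · rcases eq_or_lt_of_le hc with he | hc'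
      · rw [f_eq_P hm0, f_eq_N hm0', comp_PN_ge hm0 (by omega) (fun h' => by omega),
          sugMul_pn2 hm0 hm0' (by omega), f_eq_N hm0']
      · rw [f_eq_P hm0, f_eq_N hm0',
          comp_PN_lt (by omega) hc' b2 (fun h' => by omega),
          sugMul_pn1 hm0 hm0' hc', f_eq_P hm0]
    · rw [f_eq_P hm0, f_eq_N hm0', comp_PN_ge hm0 (by omega) (fun h' => by omega),
        sugMul_pn2 hm0 hm0' (by omega), f_eq_N hm0']
  · rw [f_eq_N hm0, f_eq_P hm0']
    rcases le_or_gt (-m) m' with hc | hc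
    · rcases eq_or_lt_of_le hc with he | hc'
      · rw [comp_NP_ge hm0' (by omega) (fun h' => by omega), sugMul_comm,
          sugMul_pn2 hm0' hm0 (by omega), f_eq_N hm0]
      · rw [comp_NP_lt (by omega) hc' b2' (fun h' => by omega), sugMul_comm,
          sugMul_pn1 hm0' hm0 hc', f_eq_P hm0']
    · rw [comp_NP_ge hm0' (by omega) (fun h' => by omega), sugMul_comm,
        sugMul_pn2 hm0' hm0 (by omega), f_eq_N hm0]
  · rcases le_total m m' with hle | hle
    · rw [f_eq_N hm0, f_eq_N hm0', comp_NN_ge (by omega) (by omega) (fun h' => by omega),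
        sugMul_nn (by omega) (by omega) hle, f_eq_N hm0]
    · rw [f_eq_N hm0, f_eq_N hm0', comp_NN_le (by omega) (by omega) (fun h' => by omega),
        sugMul_comm, sugMul_nn (by omega) (by omega) hle, f_eq_N hm0']

lemma f_witness {m m' : ℤ} (hm : m ∈ sugSet n) (hm' : m' ∈ sugSet n) (h : m < m') :
    ∃ p, p ∈ f n m' ∧ p ∉ f n m := by
  obtain ⟨b1, b2, b0⟩ := bound_of_mem hm
  obtain ⟨b1', b2', b0'⟩ := bound_of_mem hm'
  have hK1 : 1 ≤ K n := by omega
  rcases le_or_gt 0 m with hm0 | hm0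
  · have hm'1 : 1 ≤ m' := by omega
    rcases eq_or_lt_of_le hm0 with he | hm1
    · -- m = 0, odd case
      have hodd : n % 2 ≠ 0 := b0 he.symm
      refine ⟨(mk (K n) (by omega) (by omega),
        ⟨(K n, true), by omega, by omega, fun hp => absurd hp hodd⟩), ?_, ?_⟩
      · rw [f_eq_P (by omega)]
        exact Or.inr ⟨⟨by simp; omega, by simp; omega⟩, ⟨by simp; omega, by simp; omega⟩⟩
      · rw [← he, f_eq_P le_rfl]
        rintro (hle | ⟨w1, _⟩)
        · rcases hle with hlt | heq
          · exact lt_irrefl (K n) hlt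
          · exact absurd heq (by rw [eq_iff]; exact fun hb => Bool.noConfusion hb.2)
        · exact win_zero w1
    · -- 1 ≤ m
      refine ⟨(mk (K n + m) (by omega) (by omega), mk (K n - m) (by omega) (by omega)),
        ?_, ?_⟩
      · rw [f_eq_P (by omega), mem_P]
        exact Or.inr ⟨⟨by simp; omega, by simp; omega⟩, ⟨by simp; omega, by simp; omega⟩⟩
      · rw [f_eq_P hm0, mem_P]
        rintro (hle | ⟨w1, w2⟩)
        · have := le_layer hle
          simp only [mk_fst] at this
          omega
        · rw [win_mk] at w1
          omega
  · rcases le_or_gt 0 m' with hm0' | hm0'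
    · refine ⟨(mk (K n) (by omega) (by omega), mk (K n) (by omega) (by omega)), ?_, ?_⟩
      · rw [f_eq_P hm0', mem_P]
        exact Or.inl (le_refl' _)
      · rw [f_eq_N hm0, mem_N]
        rintro ⟨_, hw⟩
        exact hw ⟨⟨by simp; omega, by simp; omega⟩, ⟨by simp; omega, by simp; omega⟩⟩
    · have h1' : 1 ≤ -m' := by omega
      have h2' : -m' ≤ K n - 1 := by omega
      refine ⟨(mk (K n + m') (by omega) (by omega), mk (K n - m') (by omega) (by omega)),
        ?_, ?_⟩
      · rw [f_eq_N hm0', mem_N]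
        refine ⟨Dst_of_lt (by simp; omega), ?_⟩
        rintro ⟨w1, _⟩
        rw [win_mk] at w1
        omega
      · rw [f_eq_N hm0, mem_N]
        rintro ⟨_, hw⟩
        exact hw ⟨⟨by simp; omega, by simp; omega⟩, ⟨by simp; omega, by simp; omega⟩⟩

lemma f_inj : Set.InjOn (f n) (sugSet n) := by
  intro m hm m' hm' heq
  by_contra hne
  rcases lt_or_gt_of_ne hne with h | h
  · obtain ⟨p, hp1, hp2⟩ := f_witness hm hm' h
    rw [← heq] at hp1
    exact hp2 hp1
  · obtain ⟨p, hp1, hp2⟩ := f_witness hm' hm h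
    rw [heq] at hp1
    exact hp2 hp1

lemma le_aa {u v : X n} : le n (a n u) (a n v) ↔ le n u v := by
  constructor
  · rintro (h | h)
    · rw [a_fst, a_fst] at h
      exact Or.inl h
    · exact Or.inr (a_inj h)
  · rintro (h | h)
    · exact Or.inl (by rw [a_fst, a_fst]; exact h)
    · exact Or.inr (congrArg (a n) h)

lemma aba (u : X n) : a n (b n (a n u)) = b n u := by
  rw [eq_iff]
  refine ⟨by simp, ?_⟩
  simp only [a_snd, b_snd, b_fst, a_fst]
  by_cases hc : n % 2 = 0 ∧ u.1.1 = K n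
  · rw [if_pos hc]; exact if_pos (⟨hc.1, by omega⟩ : n % 2 = 0 ∧ 2 * K n - u.1.1 = K n)
  · rw [if_neg hc]; exact (if_neg (fun hc' : n % 2 = 0 ∧ 2 * K n - u.1.1 = K n =>
      hc ⟨hc'.1, by omega⟩)).trans (Bool.not_not _)

lemma finiteX : Finite (X n) := by
  have h : (setOf (Valid n)).Finite := by
    refine Set.Finite.subset ((Set.finite_Icc (1 : ℤ) (2 * K n - 1)).prod
      (Set.finite_univ (α := Bool))) ?_
    rintro ⟨i, s⟩ ⟨h1, h2, _⟩
    exact ⟨Set.mem_Icc.2 ⟨h1, h2⟩, trivial⟩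
  exact h.to_subtype

end Sug

/-- Every finite Sugihara chain `Sₙ` (`n ≥ 2`), viewed as a
distributive quasi relation algebra (with carrier the index set `sugSet n`,
meet `min`, join `max`, multiplication `sugMulIdx`, `∼ = − = ¬` given by index
negation, identity `sugOneIdx n` and `0 = ∼1`), is finitely representable:
it embeds as a qRA into `Dq(E)` for a finite poset `X`. -/
theorem sugihara_chain_finitely_representable (n : ℕ) (hn : 2 ≤ n) :
    FinRepresentableOn ℤ (sugSet n) (fun i j => min i j) (fun i j => max i j)
      sugMulIdx (fun i => -i) (fun i => -i) (fun i => -i)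
      (sugOneIdx n) (-sugOneIdx n) := by
  have one_mem : sugOneIdx n ∈ sugSet n := by
    by_cases h : n % 2 = 0
    · rw [Sug.oneIdx_even h]
      exact ⟨by rw [abs_one]; exact_mod_cast hn, fun _ => one_ne_zero⟩
    · rw [Sug.oneIdx_odd h]
      exact ⟨by rw [abs_zero]; positivity, fun hev _ => h (Nat.even_iff.1 hev)⟩
  refine ⟨Sug.X n, Sug.le n, Set.univ, Sug.a n, Sug.b n, Sug.f n, Sug.finiteX, ?_⟩
  refine
    { base :=
      { le_refl := Sug.le_refl'
        le_antisymm := fun _ _ h h' => Sug.le_antisymm' h h'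
        le_trans := fun _ _ _ h h' => Sug.le_trans' h h'
        equiv := ⟨fun _ => trivial, fun _ => trivial, fun _ _ => trivial⟩
        le_sub := fun _ _ _ => trivial
        a_bij := ⟨fun _ _ h => Sug.a_inj h, fun u => ⟨Sug.a n u, Sug.a_invol u⟩⟩
        a_ord := fun _ _ => Sug.le_aa.symm
        b_invol := Sug.b_invol
        b_dual := fun _ _ => Sug.le_bb.symm
        a_sub := fun _ => trivial
        b_sub := fun _ => trivial
        aba := Sug.aba }
      closed_inf := fun m hm m' hm' => ?_
      closed_sup := fun m hm m' hm' => ?_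
      closed_mul := fun _ hm _ hm' => Sug.sugMul_mem hm hm'
      closed_sneg := fun _ hm => Sug.neg_mem hm
      closed_rneg := fun _ hm => Sug.neg_mem hm
      closed_qneg := fun _ hm => Sug.neg_mem hm
      one_mem := one_mem
      zero_mem := Sug.neg_mem one_mem
      maps_up := fun m _ => ?_
      inj := Sug.f_inj
      map_inf := fun m hm m' hm' => ?_
      map_sup := fun m hm m' hm' => ?_
      map_mul := fun _ hm _ hm' => (Sug.comp_f hm hm').symm
      map_sneg := fun m hm => ?_
      map_rneg := fun m hm => ?_
      map_qneg := fun m hm => ?_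
      map_one := Sug.f_one
      map_zero := Sug.f_zero }
  · -- closed_inf
    rcases le_total m m' with h | h
    · simpa [min_eq_left h] using hm
    · simpa [min_eq_right h] using hm'
  · -- closed_sup
    rcases le_total m m' with h | h
    · simpa [max_eq_right h] using hm'
    · simpa [max_eq_left h] using hm
  · -- maps_up
    rcases le_or_gt 0 m with h | h
    · rw [Sug.f_eq_P h]
      exact Sug.upset_P
    · rw [Sug.f_eq_N h]
      exact Sug.upset_N
  · -- map_inf
    rcases le_total m m' with h | h
    · simp only [min_eq_left h]
      exact (Set.inter_eq_left.2 (Sug.f_mono hm hm' h)).symm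
    · simp only [min_eq_right h]
      exact (Set.inter_eq_right.2 (Sug.f_mono hm' hm h)).symm
  · -- map_sup
    rcases le_total m m' with h | h
    · simp only [max_eq_right h]
      exact (Set.union_eq_right.2 (Sug.f_mono hm hm' h)).symm
    · simp only [max_eq_left h]
      exact (Set.union_eq_left.2 (Sug.f_mono hm' hm h)).symm
  · -- map_sneg
    obtain ⟨b1, b2, b0⟩ := Sug.bound_of_mem hm
    rcases le_or_gt 0 m with h | h
    · rw [Sug.f_eq_P h, Sug.sneg_P, Sug.f_eq_N' (by omega) (fun h0 => b0 (by omega)),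
        neg_neg]
    · rw [Sug.f_eq_N h, Sug.sneg_N, Sug.f_eq_P (by omega)]
  · -- map_rneg
    obtain ⟨b1, b2, b0⟩ := Sug.bound_of_mem hm
    rcases le_or_gt 0 m with h | h
    · rw [Sug.f_eq_P h, Sug.rneg_P, Sug.f_eq_N' (by omega) (fun h0 => b0 (by omega)),
        neg_neg]
    · rw [Sug.f_eq_N h, Sug.rneg_N, Sug.f_eq_P (by omega)]
  · -- map_qneg
    obtain ⟨b1, b2, b0⟩ := Sug.bound_of_mem hm
    rcases le_or_gt 0 m with h | h
    · rw [Sug.f_eq_P h, Sug.qneg_P, Sug.f_eq_N' (by omega) (fun h0 => b0 (by omega)),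
        neg_neg]
    · rw [Sug.f_eq_N h, Sug.qneg_N, Sug.f_eq_P (by omega)]
end
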